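/- arXiv:math/0408329 — 8 statements merged into one kernel-verified Lean document; each statement's English description precedes it below -/
import Mathlib

section
/- Let E be a strictly convex Banach space, C a subset of E, and let S and T be nonexpansive mappings from C into E that have a common fixed point. Then for each λ ∈ (0,1), the mapping U from C into E defined by Ux = λ·Sx + (1−λ)·Tx for x ∈ C is nonexpansive, and F(U) = F(S) ∩ F(T). -/
open Filter Topology

/-- Bruck's lemma: in a strictly convex Banach space, a convex combination
`U = λ S + (1-λ) T` of two nonexpansive mappings from `C` into `E` having a
common fixed point is nonexpansive and `F(U) = F(S) ∩ F(T)`. -/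
theorem stmt_0 (E : Type*) [NormedAddCommGroup E] [NormedSpace ℝ E] [CompleteSpace E]
    (hsc : ∀ x y : E, ‖x‖ = 1 → ‖y‖ = 1 → x ≠ y → ‖x + y‖ / 2 < 1)
    (C : Set E) (S T : E → E)
    (hS : ∀ x ∈ C, ∀ y ∈ C, ‖S x - S y‖ ≤ ‖x - y‖)
    (hT : ∀ x ∈ C, ∀ y ∈ C, ‖T x - T y‖ ≤ ‖x - y‖)
    (hcommon : ∃ w ∈ C, S w = w ∧ T w = w)
    (lam : ℝ) (hlam : lam ∈ Set.Ioo (0 : ℝ) 1)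
    (U : E → E) (hU : ∀ x ∈ C, U x = lam • S x + (1 - lam) • T x) :
    (∀ x ∈ C, ∀ y ∈ C, ‖U x - U y‖ ≤ ‖x - y‖) ∧
      {x ∈ C | U x = x} = {x ∈ C | S x = x} ∩ {x ∈ C | T x = x} := by
  obtain ⟨hl0, hl1⟩ := hlam
  -- strict convexity for general coefficients
  have core : ∀ μ : ℝ, 0 < μ → μ ≤ 1/2 → ∀ a b : E, ‖a‖ = 1 → ‖b‖ = 1 → a ≠ b →
      ‖μ • a + (1 - μ) • b‖ < 1 := by
    intro μ hμ0 hμh a b ha hb hab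
    have heq : μ • a + (1 - μ) • b = μ • (a + b) + (1 - 2*μ) • b := by module
    rw [heq]
    have hle : ‖μ • (a + b) + (1 - 2*μ) • b‖ ≤ μ * ‖a + b‖ + (1 - 2*μ) * ‖b‖ := by
      refine (norm_add_le _ _).trans ?_
      rw [norm_smul, norm_smul, Real.norm_eq_abs, Real.norm_eq_abs,
        abs_of_pos hμ0, abs_of_nonneg (by linarith)]
    have h2 := hsc a b ha hb hab
    nlinarith [h2, hle, hb]
  have key : ∀ μ : ℝ, 0 < μ → μ < 1 → ∀ a b : E, ‖a‖ = 1 → ‖b‖ = 1 → a ≠ b →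
      ‖μ • a + (1 - μ) • b‖ < 1 := by
    intro μ hμ0 hμ1 a b ha hb hab
    rcases le_or_gt μ (1/2) with h | h
    · exact core μ hμ0 h a b ha hb hab
    · have h' := core (1 - μ) (by linarith) (by linarith) b a hb ha (Ne.symm hab)
      have heq : (1 - μ) • b + (1 - (1 - μ)) • a = μ • a + (1 - μ) • b := by module
      rwa [heq] at h'
  -- nonexpansiveness
  have hne : ∀ x ∈ C, ∀ y ∈ C, ‖U x - U y‖ ≤ ‖x - y‖ := by
    intro x hx y hy
    rw [hU x hx, hU y hy]
    have heq : lam • S x + (1 - lam) • T x - (lam • S y + (1 - lam) • T y)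
        = lam • (S x - S y) + (1 - lam) • (T x - T y) := by module
    rw [heq]
    have hle : ‖lam • (S x - S y) + (1 - lam) • (T x - T y)‖
        ≤ lam * ‖S x - S y‖ + (1 - lam) * ‖T x - T y‖ := by
      refine (norm_add_le _ _).trans ?_
      rw [norm_smul, norm_smul, Real.norm_eq_abs, Real.norm_eq_abs,
        abs_of_pos hl0, abs_of_nonneg (by linarith)]
    have h1 := hS x hx y hy
    have h2 := hT x hx y hy
    nlinarith
  refine ⟨hne, ?_⟩
  obtain ⟨w, hwC, hSw, hTw⟩ := hcommon
  ext x
  simp only [Set.mem_setOf_eq, Set.mem_inter_iff, Set.mem_sep_iff]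
  constructor
  · rintro ⟨hxC, hUx⟩
    have hS' : ‖S x - w‖ ≤ ‖x - w‖ := by
      have := hS x hxC w hwC; rwa [hSw] at this
    have hT' : ‖T x - w‖ ≤ ‖x - w‖ := by
      have := hT x hxC w hwC; rwa [hTw] at this
    have hxw : x - w = lam • (S x - w) + (1 - lam) • (T x - w) := by
      conv_lhs => rw [← hUx, hU x hxC]
      module
    have h1 : ‖x - w‖ ≤ lam * ‖S x - w‖ + (1 - lam) * ‖T x - w‖ := by
      rw [hxw]
      refine (norm_add_le _ _).trans ?_
      rw [norm_smul, norm_smul, Real.norm_eq_abs, Real.norm_eq_abs,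
        abs_of_pos hl0, abs_of_nonneg (by linarith)]
    have heqS : ‖S x - w‖ = ‖x - w‖ := by nlinarith
    have heqT : ‖T x - w‖ = ‖x - w‖ := by nlinarith
    have hST : S x = T x := by
      by_contra hST
      rcases eq_or_ne x w with rfl | hxw0
      · apply hST
        have h1 : S x - x = 0 := by
          rw [← norm_eq_zero]; simpa using heqS
        have h2 : T x - x = 0 := by
          rw [← norm_eq_zero]; simpa using heqT
        rw [sub_eq_zero] at h1 h2
        rw [h1, h2]
      · set r := ‖x - w‖ with hr
        have hr0 : 0 < r := by
          rw [hr, norm_pos_iff]; exact sub_ne_zero_of_ne hxw0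
        set a := r⁻¹ • (S x - w) with ha
        set b := r⁻¹ • (T x - w) with hb
        have hna : ‖a‖ = 1 := by
          rw [ha, norm_smul, Real.norm_eq_abs, abs_of_pos (inv_pos.mpr hr0), heqS]
          field_simp
        have hnb : ‖b‖ = 1 := by
          rw [hb, norm_smul, Real.norm_eq_abs, abs_of_pos (inv_pos.mpr hr0), heqT]
          field_simp
        have hab : a ≠ b := by
          intro h
          apply hST
          have := smul_right_injective E (ne_of_gt (inv_pos.mpr hr0)) h
          have h2 : S x - w = T x - w := this
          linear_combination (norm := abel) h2
        have hlt := key lam hl0 hl1 a b hna hnb hab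
        have hcomb : lam • a + (1 - lam) • b = r⁻¹ • (x - w) := by
          rw [ha, hb, hxw]; module
        rw [hcomb, norm_smul, Real.norm_eq_abs, abs_of_pos (inv_pos.mpr hr0), ← hr,
          inv_mul_cancel₀ (ne_of_gt hr0)] at hlt
        exact lt_irrefl _ hlt
    have hSx : S x = x := by
      have : U x = S x := by
        rw [hU x hxC, hST]; module
      rw [← this, hUx]
    exact ⟨⟨hxC, hSx⟩, ⟨hxC, hST ▸ hSx⟩⟩
  · rintro ⟨⟨hxC, hSx⟩, ⟨_, hTx⟩⟩
    refine ⟨hxC, ?_⟩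
    rw [hU x hxC, hSx, hTx]
    module
end

section
/- Let E be a Banach space, let τ be a Hausdorff topology on E, and let {T(t) : t ≥ 0} be a one-parameter τ-continuous semigroup of mappings on a subset C of E. Let {α_n} be a sequence in [0,∞) converging to some α_∞ ∈ [0,∞) with α_n ≠ α_∞ for all n ∈ ℕ. Suppose z ∈ C satisfies T(α_n)z = z for all n ∈ ℕ. Then T(t)z = z for every t ≥ 0, i.e., z is a common fixed point of {T(t) : t ≥ 0}. -/
open Filter Topology

/-- Proposition 5 of the paper: if `z` is fixed by `T(α_n)` for a nonnegative
sequence `α_n → α_∞` with `α_n ≠ α_∞`, then `z` is a common fixed point of the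
one-parameter `τ`-continuous semigroup `{T(t) : t ≥ 0}`. -/
theorem stmt_3 (E : Type*) [NormedAddCommGroup E] [NormedSpace ℝ E] [CompleteSpace E]
    (τ : TopologicalSpace E) (hτ : @T2Space E τ)
    (C : Set E) (T : ℝ → E → E)
    (hmaps : ∀ t : ℝ, 0 ≤ t → ∀ x ∈ C, T t x ∈ C)
    (hsg : ∀ s : ℝ, 0 ≤ s → ∀ t : ℝ, 0 ≤ t → ∀ x ∈ C, T (s + t) x = T s (T t x))
    (hcont : ∀ x ∈ C, @ContinuousOn ℝ E _ τ (fun t => T t x) (Set.Ici 0))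
    (a : ℕ → ℝ) (ainf : ℝ)
    (ha : ∀ n, 1 ≤ n → 0 ≤ a n) (hainf : 0 ≤ ainf)
    (halim : Tendsto a atTop (𝓝 ainf))
    (hane : ∀ n, 1 ≤ n → a n ≠ ainf)
    (z : E) (hz : z ∈ C) (hfix : ∀ n, 1 ≤ n → T (a n) z = z) :
    ∀ t : ℝ, 0 ≤ t → T t z = z := by
  set G : Set ℝ := {t | 0 ≤ t ∧ T t z = z} with hGdef
  -- T 0 z = z
  have h0 : T 0 z = z := by
    have h := hsg 0 le_rfl (a 1) (ha 1 le_rfl) z hz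
    rw [zero_add, hfix 1 le_rfl] at h
    exact h.symm
  have h0G : (0 : ℝ) ∈ G := ⟨le_rfl, h0⟩
  -- additive closure
  have hadd : ∀ s ∈ G, ∀ t ∈ G, s + t ∈ G := fun s hs t ht =>
    ⟨add_nonneg hs.1 ht.1, by rw [hsg s hs.1 t ht.1 z hz, ht.2, hs.2]⟩
  -- difference closure
  have hsub : ∀ s ∈ G, ∀ t ∈ G, s ≤ t → t - s ∈ G := by
    intro s hs t ht hle
    refine ⟨sub_nonneg.2 hle, ?_⟩
    have h := hsg (t - s) (sub_nonneg.2 hle) s hs.1 z hz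
    rw [sub_add_cancel, hs.2] at h
    rw [← h, ht.2]
  -- G is closed
  have hGclosed : IsClosed G := by
    have hzc : @IsClosed E τ {z} := @isClosed_singleton E τ (@T2Space.t1Space E τ hτ) z
    have h := (hcont z hz).preimage_isClosed_of_isClosed isClosed_Ici hzc
    have heq : G = Set.Ici 0 ∩ (fun t => T t z) ⁻¹' {z} := by
      ext t; simp [hGdef, Set.mem_Ici, and_comm]
    rw [heq]
    exact h
  -- natural multiples
  have hmul : ∀ (k : ℕ), ∀ s ∈ G, (k : ℝ) * s ∈ G := by
    intro k
    induction k with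
    | zero => intro s hs; simpa using h0G
    | succ k ih =>
        intro s hs
        have := hadd _ (ih s hs) s hs
        have heq : (↑(k + 1) : ℝ) * s = (k : ℝ) * s + s := by push_cast; ring
        rwa [heq]
  -- a n ∈ G for n ≥ 1
  have haG : ∀ n, 1 ≤ n → a n ∈ G := fun n hn => ⟨ha n hn, hfix n hn⟩
  -- ainf ∈ G
  have hainfG : ainf ∈ G :=
    hGclosed.mem_of_tendsto halim (eventually_atTop.2 ⟨1, fun n hn => haG n hn⟩)
  -- eps n := |a n - ainf| ∈ G, positive, → 0
  set e : ℕ → ℝ := fun n => |a n - ainf| with hedef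
  have heG : ∀ n, 1 ≤ n → e n ∈ G := by
    intro n hn
    rcases le_total ainf (a n) with h | h
    · rw [hedef]; simp only [abs_of_nonneg (sub_nonneg.2 h)]
      exact hsub ainf hainfG (a n) (haG n hn) h
    · rw [hedef]; simp only [abs_of_nonpos (sub_nonpos.2 h), neg_sub]
      exact hsub (a n) (haG n hn) ainf hainfG h
  have hepos : ∀ n, 1 ≤ n → 0 < e n := fun n hn =>
    abs_pos.2 (sub_ne_zero.2 (hane n hn))
  have helim : Tendsto e atTop (𝓝 0) := by
    have : Tendsto (fun n => a n - ainf) atTop (𝓝 (ainf - ainf)) :=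
      halim.sub tendsto_const_nhds
    rw [sub_self] at this
    simpa [hedef] using this.abs
  -- main argument
  intro t ht
  suffices htG : t ∈ G from htG.2
  set b : ℕ → ℝ := fun n => (⌊t / e n⌋₊ : ℝ) * e n with hbdef
  have hbG : ∀ n, 1 ≤ n → b n ∈ G := fun n hn => hmul _ _ (heG n hn)
  have hble : ∀ n, 1 ≤ n → b n ≤ t := by
    intro n hn
    have h1 : (⌊t / e n⌋₊ : ℝ) ≤ t / e n := Nat.floor_le (div_nonneg ht (hepos n hn).le)
    calc b n ≤ (t / e n) * e n := mul_le_mul_of_nonneg_right h1 (hepos n hn).le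
      _ = t := div_mul_cancel₀ t (hepos n hn).ne'
  have hbgt : ∀ n, 1 ≤ n → t - e n < b n := by
    intro n hn
    have h1 : t / e n < ⌊t / e n⌋₊ + 1 := Nat.lt_floor_add_one _
    have h2 : t < ((⌊t / e n⌋₊ : ℝ) + 1) * e n := by
      calc t = (t / e n) * e n := (div_mul_cancel₀ t (hepos n hn).ne').symm
        _ < ((⌊t / e n⌋₊ : ℝ) + 1) * e n :=
          mul_lt_mul_of_pos_right h1 (hepos n hn)
    have h3 : ((⌊t / e n⌋₊ : ℝ) + 1) * e n = (⌊t / e n⌋₊ : ℝ) * e n + e n := by ring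
    rw [h3] at h2
    simp only [hbdef]
    linarith
  have hblim : Tendsto b atTop (𝓝 t) := by
    have hlo : Tendsto (fun n => t - e n) atTop (𝓝 t) := by
      have := tendsto_const_nhds.sub helim (α := ℕ) (f := fun _ => t)
      simpa using this
    refine tendsto_of_tendsto_of_tendsto_of_le_of_le' hlo tendsto_const_nhds
      (eventually_atTop.2 ⟨1, fun n hn => (hbgt n hn).le⟩)
      (eventually_atTop.2 ⟨1, fun n hn => hble n hn⟩)
  exact hGclosed.mem_of_tendsto hblim (eventually_atTop.2 ⟨1, fun n hn => hbG n hn⟩)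
end

section
/- Let E be a Banach space, let τ be a Hausdorff topology on E, and let {T(t) : t ≥ 0} be a one-parameter τ-continuous semigroup of mappings on a subset C of E. Let α and β be positive real numbers with α/β irrational. Then ⋂_{t ≥ 0} F(T(t)) = F(T(α)) ∩ F(T(β)). -/
open Filter Topology

/-- Proposition 6 of the paper: for a one-parameter `τ`-continuous semigroup of
mappings on `C` and positive reals `α, β` with `α/β` irrational,
`⋂_{t ≥ 0} F(T(t)) = F(T(α)) ∩ F(T(β))`. -/
theorem stmt_4 (E : Type*) [NormedAddCommGroup E] [NormedSpace ℝ E] [CompleteSpace E]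
    (τ : TopologicalSpace E) (hτ : @T2Space E τ)
    (C : Set E) (T : ℝ → E → E)
    (hmaps : ∀ t : ℝ, 0 ≤ t → ∀ x ∈ C, T t x ∈ C)
    (hsg : ∀ s : ℝ, 0 ≤ s → ∀ t : ℝ, 0 ≤ t → ∀ x ∈ C, T (s + t) x = T s (T t x))
    (hcont : ∀ x ∈ C, @ContinuousOn ℝ E _ τ (fun t => T t x) (Set.Ici 0))
    (α β : ℝ) (hα : 0 < α) (hβ : 0 < β) (hirr : Irrational (α / β)) :
    {x ∈ C | ∀ t : ℝ, 0 ≤ t → T t x = x}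
      = {x ∈ C | T α x = x} ∩ {x ∈ C | T β x = x} := by
  ext x
  simp only [Set.mem_setOf_eq, Set.mem_inter_iff, Set.mem_sep_iff]
  constructor
  · rintro ⟨hx, h⟩
    exact ⟨⟨hx, h α hα.le⟩, ⟨hx, h β hβ.le⟩⟩
  rintro ⟨⟨hx, hfa⟩, ⟨-, hfb⟩⟩
  refine ⟨hx, ?_⟩
  -- iterated fixed points for multiples of α
  have hA : ∀ m : ℕ, T ((m + 1 : ℕ) * α) x = x := by
    intro m
    induction m with
    | zero => simpa using hfa
    | succ m ih =>
      have e : ((m + 2 : ℕ) : ℝ) * α = α + ((m + 1 : ℕ) : ℝ) * α := by push_cast; ring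
      rw [e, hsg α hα.le _ (by positivity) x hx, ih, hfa]
  have hB : ∀ m : ℕ, T ((m + 1 : ℕ) * β) x = x := by
    intro m
    induction m with
    | zero => simpa using hfb
    | succ m ih =>
      have e : ((m + 2 : ℕ) : ℝ) * β = β + ((m + 1 : ℕ) : ℝ) * β := by push_cast; ring
      rw [e, hsg β hβ.le _ (by positivity) x hx, ih, hfb]
  have hC : ∀ p q : ℕ, T ((p + 1 : ℕ) * α + (q + 1 : ℕ) * β) x = x := by
    intro p q
    rw [hsg _ (by positivity) _ (by positivity) x hx, hB, hA]
  -- fixed points for positive integer combinations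
  have hS : ∀ s : ℝ, 0 < s → (∃ z w : ℤ, (z : ℝ) * α + (w : ℝ) * β = s) → T s x = x := by
    rintro s hs ⟨z, w, rfl⟩
    obtain ⟨k, hk1', hzk, hwk⟩ : ∃ k : ℕ, 1 ≤ k ∧ 1 ≤ z + k ∧ 1 ≤ w + k := by
      refine ⟨(max (-z) (-w)).toNat + 1, by omega, ?_, ?_⟩
      · have h1 : -z ≤ ((max (-z) (-w)).toNat : ℤ) :=
          le_trans (le_max_left _ _) (Int.self_le_toNat _)
        omega
      · have h1 : -w ≤ ((max (-z) (-w)).toNat : ℤ) :=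
          le_trans (le_max_right _ _) (Int.self_le_toNat _)
        omega
    obtain ⟨p, hpz⟩ : ∃ p : ℕ, (p : ℤ) = z + k - 1 := ⟨_, Int.toNat_of_nonneg (by omega)⟩
    obtain ⟨q, hqw⟩ : ∃ q : ℕ, (q : ℤ) = w + k - 1 := ⟨_, Int.toNat_of_nonneg (by omega)⟩
    have hpzR : (p : ℝ) = (z : ℝ) + (k : ℝ) - 1 := by exact_mod_cast hpz
    have hqwR : (q : ℝ) = (w : ℝ) + (k : ℝ) - 1 := by exact_mod_cast hqw
    have key : T (((z : ℝ) * α + (w : ℝ) * β) + ((k : ℝ) * α + (k : ℝ) * β)) x = x := by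
      have e : ((z : ℝ) * α + (w : ℝ) * β) + ((k : ℝ) * α + (k : ℝ) * β)
          = ((p + 1 : ℕ) : ℝ) * α + ((q + 1 : ℕ) : ℝ) * β := by
        push_cast
        rw [hpzR, hqwR]; ring
      rw [e]; exact hC p q
    have hk1 : 1 ≤ k := by omega
    have hkfix : T ((k : ℝ) * α + (k : ℝ) * β) x = x := by
      obtain ⟨k', rfl⟩ : ∃ k', k = k' + 1 := ⟨k - 1, by omega⟩
      exact hC k' k'
    rw [hsg _ hs.le _ (by positivity) x hx, hkfix] at key
    exact key
  -- the subgroup generated by α and β is dense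
  have hdense : Dense ((AddSubgroup.closure ({α, β} : Set ℝ) : AddSubgroup ℝ) : Set ℝ) := by
    rcases AddSubgroup.dense_or_cyclic (AddSubgroup.closure ({α, β} : Set ℝ)) with h | ⟨a, ha⟩
    · exact h
    · exfalso
      have hαm : α ∈ AddSubgroup.closure ({α, β} : Set ℝ) :=
        AddSubgroup.subset_closure (by simp)
      have hβm : β ∈ AddSubgroup.closure ({α, β} : Set ℝ) :=
        AddSubgroup.subset_closure (by simp)
      rw [ha] at hαm hβm
      obtain ⟨m, hm⟩ := AddSubgroup.mem_closure_singleton.mp hαm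
      obtain ⟨n, hn⟩ := AddSubgroup.mem_closure_singleton.mp hβm
      rw [zsmul_eq_mul] at hm hn
      have ha0 : a ≠ 0 := by
        rintro rfl; rw [mul_zero] at hn; exact hβ.ne' hn.symm
      have hdiv : α / β = (m : ℝ) / (n : ℝ) := by
        rw [← hm, ← hn, mul_comm ((m:ℝ)) a, mul_comm ((n:ℝ)) a, mul_div_mul_left _ _ ha0]
      exact hirr ⟨(m : ℚ) / (n : ℚ), by push_cast; exact hdiv.symm⟩
  -- now prove the fixed point property for all t ≥ 0
  intro t ht
  -- choose a sequence in the subgroup converging to t from above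
  have hex : ∀ n : ℕ, ∃ s : ℝ, s ∈ (AddSubgroup.closure ({α, β} : Set ℝ) : Set ℝ) ∧
      s ∈ Set.Ioo t (t + 1 / (n + 1)) := by
    intro n
    obtain ⟨s, hs1, hs2⟩ := hdense.exists_between (lt_add_of_pos_right t (by positivity : (0:ℝ) < 1 / ((n : ℝ) + 1)))
    exact ⟨s, hs1, hs2⟩
  choose s hsG hsIoo using hex
  have hfix : ∀ n : ℕ, T (s n) x = x := by
    intro n
    have hpos : 0 < s n := lt_of_le_of_lt ht (hsIoo n).1
    obtain ⟨z, w, hzw⟩ := AddSubgroup.mem_closure_pair.mp (hsG n)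
    rw [zsmul_eq_mul, zsmul_eq_mul] at hzw
    exact hS (s n) hpos ⟨z, w, hzw⟩
  have hslim : Tendsto s atTop (𝓝 t) := by
    have h1 : Tendsto (fun n : ℕ => t + 1 / ((n : ℝ) + 1)) atTop (𝓝 t) := by
      have := tendsto_one_div_add_atTop_nhds_zero_nat (𝕜 := ℝ)
      have := (tendsto_const_nhds (x := t) (f := atTop (α := ℕ))).add this
      simpa using this
    exact tendsto_of_tendsto_of_tendsto_of_le_of_le tendsto_const_nhds h1
      (fun n => (hsIoo n).1.le) (fun n => (hsIoo n).2.le)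
  have hslim' : Tendsto s atTop (𝓝[Set.Ici 0] t) :=
    tendsto_nhdsWithin_of_tendsto_nhds_of_eventually_within s hslim
      (Eventually.of_forall fun n => le_trans ht (hsIoo n).1.le)
  have hct : @ContinuousWithinAt ℝ E _ τ (fun t => T t x) (Set.Ici 0) t :=
    hcont x hx t (Set.mem_Ici.mpr ht)
  have hlim1 : Tendsto (fun n => T (s n) x) atTop (@nhds E τ (T t x)) := Filter.Tendsto.comp hct hslim'
  have hlim2 : Tendsto (fun n => T (s n) x) atTop (@nhds E τ x) := by
    have : (fun n => T (s n) x) = fun _ : ℕ => x := funext hfix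
    rw [this]
    exact @tendsto_const_nhds E τ ℕ x atTop
  exact @tendsto_nhds_unique E ℕ τ hτ _ atTop _ _ _ hlim1 hlim2
end

section
/- Let E be a Banach space, let τ be a Hausdorff topology on E, and let {T(t) : t ≥ 0} be a one-parameter τ-continuous semigroup of mappings on a subset C of E. Then ⋂_{t ≥ 0} F(T(t)) = F(T(1)) ∩ F(T(√2)). -/
open Filter Topology

/-- Corollary 7 of the paper: for a one-parameter `τ`-continuous semigroup of
mappings on `C`, `⋂_{t ≥ 0} F(T(t)) = F(T(1)) ∩ F(T(√2))`. -/
theorem stmt_5 (E : Type*) [NormedAddCommGroup E] [NormedSpace ℝ E] [CompleteSpace E]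
    (τ : TopologicalSpace E) (hτ : @T2Space E τ)
    (C : Set E) (T : ℝ → E → E)
    (hmaps : ∀ t : ℝ, 0 ≤ t → ∀ x ∈ C, T t x ∈ C)
    (hsg : ∀ s : ℝ, 0 ≤ s → ∀ t : ℝ, 0 ≤ t → ∀ x ∈ C, T (s + t) x = T s (T t x))
    (hcont : ∀ x ∈ C, @ContinuousOn ℝ E _ τ (fun t => T t x) (Set.Ici 0)) :
    {x ∈ C | ∀ t : ℝ, 0 ≤ t → T t x = x}
      = {x ∈ C | T 1 x = x} ∩ {x ∈ C | T (Real.sqrt 2) x = x} := by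
  ext x
  simp only [Set.mem_setOf_eq, Set.mem_inter_iff, Set.mem_sep_iff]
  constructor
  · rintro ⟨hC, h⟩
    exact ⟨⟨hC, h 1 one_pos.le⟩, hC, h _ (Real.sqrt_nonneg 2)⟩
  rintro ⟨⟨hC, h1⟩, -, h2⟩
  refine ⟨hC, ?_⟩
  -- T 0 x = x
  have h0 : T 0 x = x := by
    have := hsg 0 le_rfl 1 zero_le_one x hC
    rw [zero_add, h1] at this
    exact this.symm
  -- the set of fixed times
  set S : Set ℝ := {t : ℝ | 0 ≤ t ∧ T t x = x} with hS
  have hSadd : ∀ s ∈ S, ∀ t ∈ S, s + t ∈ S := by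
    rintro s ⟨hs0, hs⟩ t ⟨ht0, ht⟩
    refine ⟨add_nonneg hs0 ht0, ?_⟩
    rw [hsg s hs0 t ht0 x hC, ht, hs]
  have hSsub : ∀ s ∈ S, ∀ t ∈ S, s ≤ t → t - s ∈ S := by
    rintro s ⟨hs0, hs⟩ t ⟨ht0, ht⟩ hst
    refine ⟨sub_nonneg.2 hst, ?_⟩
    have := hsg (t - s) (sub_nonneg.2 hst) s hs0 x hC
    rw [sub_add_cancel, hs] at this
    rw [← this, ht]
  have h1S : (1 : ℝ) ∈ S := ⟨zero_le_one, h1⟩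
  have h2S : Real.sqrt 2 ∈ S := ⟨Real.sqrt_nonneg 2, h2⟩
  have h0S : (0 : ℝ) ∈ S := ⟨le_rfl, h0⟩
  -- the difference subgroup
  let H : AddSubgroup ℝ :=
    { carrier := {t : ℝ | ∃ a ∈ S, ∃ b ∈ S, t = a - b}
      zero_mem' := ⟨0, h0S, 0, h0S, by ring⟩
      add_mem' := by
        rintro u v ⟨a, ha, b, hb, rfl⟩ ⟨c, hc, d, hd, rfl⟩
        exact ⟨a + c, hSadd a ha c hc, b + d, hSadd b hb d hd, by ring⟩
      neg_mem' := by
        rintro u ⟨a, ha, b, hb, rfl⟩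
        exact ⟨b, hb, a, ha, by ring⟩ }
  have h1H : (1 : ℝ) ∈ H := ⟨1, h1S, 0, h0S, by ring⟩
  have h2H : Real.sqrt 2 ∈ H := ⟨Real.sqrt 2, h2S, 0, h0S, by ring⟩
  -- H is dense
  have hdense : Dense (H : Set ℝ) := by
    rcases H.dense_or_cyclic with hd | ⟨a, ha⟩
    · exact hd
    · exfalso
      rw [ha, AddSubgroup.mem_closure_singleton] at h1H h2H
      obtain ⟨m, hm⟩ := h1H
      obtain ⟨n, hn⟩ := h2H
      have hm0 : m ≠ 0 := by rintro rfl; simp at hm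
      have ha0 : a ≠ 0 := by rintro rfl; simp at hm
      have : Real.sqrt 2 = (n : ℝ) / (m : ℝ) := by
        field_simp
        rw [mul_comm]
        rw [zsmul_eq_mul] at hm hn
        calc (m : ℝ) * Real.sqrt 2 = m * (n * a) := by rw [hn]
          _ = n * (m * a) := by ring
          _ = n * 1 := by rw [hm]
          _ = n := by ring
      exact irrational_sqrt_two (this ▸ ⟨(n : ℚ) / (m : ℚ), by push_cast; ring⟩)
  -- nonnegative elements of H lie in S
  have hHS : ∀ u ∈ H, 0 ≤ u → u ∈ S := by
    rintro u ⟨a, ha, b, hb, rfl⟩ hu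
    exact hSsub b hb a ha (sub_nonneg.1 hu)
  -- now prove the goal
  intro t ht
  rcases eq_or_lt_of_le ht with rfl | ht
  · exact h0
  -- t > 0 : t ∈ closure S
  have htcl : t ∈ closure S := by
    rw [mem_closure_iff_nhds]
    intro U hU
    obtain ⟨V, hVU, hVo, htV⟩ := mem_nhds_iff.1 hU
    have hVI : IsOpen (V ∩ Set.Ioi (0 : ℝ)) := hVo.inter isOpen_Ioi
    have hne : (V ∩ Set.Ioi (0 : ℝ)).Nonempty := ⟨t, htV, ht⟩
    obtain ⟨u, huH, huV⟩ := hdense.exists_mem_open hVI hne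
    exact ⟨u, hVU huV.1, hHS u huH huV.2.le⟩
  -- continuity and Hausdorff give the result
  have hcw : @ContinuousWithinAt ℝ E _ τ (fun s => T s x) (Set.Ici 0) t :=
    hcont x hC t ht.le
  have hmono : Filter.Tendsto (fun s => T s x) (𝓝[S] t) (@nhds E τ (T t x)) :=
    hcw.mono fun s hs => hs.1
  have hconst : Filter.Tendsto (fun s => T s x) (𝓝[S] t) (@nhds E τ x) := by
    have : ∀ᶠ s in 𝓝[S] t, T s x = x :=
      eventually_nhdsWithin_of_forall fun s hs => hs.2
    exact (Filter.tendsto_congr' this).2 (Filter.Tendsto.mono_right Filter.tendsto_const_pure (@pure_le_nhds E τ x))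
  have hne : (𝓝[S] t).NeBot := mem_closure_iff_nhdsWithin_neBot.1 htcl
  exact @tendsto_nhds_unique E ℝ τ hτ _ (𝓝[S] t) _ _ hne hmono hconst
end

section
/- Let E be a strictly convex Banach space, let τ be a Hausdorff topology on E, and let {T(t) : t ≥ 0} be a one-parameter τ-continuous semigroup of nonexpansive mappings on a subset C of E. Let α and β be positive real numbers with α/β irrational and F(T(α)) ∩ F(T(β)) ≠ ∅. Then for every λ ∈ (0,1), ⋂_{t ≥ 0} F(T(t)) = {z ∈ C : λ·T(α)z + (1−λ)·T(β)z = z}. -/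
open Filter Topology


/-- The subgroup generated by `α, β` with irrational ratio contains arbitrarily
small positive elements. -/
lemma exists_small_pos_comb (α β : ℝ) (hα : 0 < α) (hβ : 0 < β)
    (hirr : Irrational (α / β)) :
    ∀ ε : ℝ, 0 < ε → ∃ a b : ℤ, 0 < a * α + b * β ∧ a * α + b * β < ε := by
  intro ε hε
  rcases AddSubgroup.dense_or_cyclic (AddSubgroup.closure ({α, β} : Set ℝ)) with hd | ⟨g, hg⟩
  · obtain ⟨x, hxS, hx⟩ := hd.exists_mem_open isOpen_Ioo (Set.nonempty_Ioo.2 hε)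
    obtain ⟨a, b, hab⟩ := AddSubgroup.mem_closure_pair.1 hxS
    refine ⟨a, b, ?_, ?_⟩
    · have : a * α + b * β = x := by rw [← hab]; push_cast [zsmul_eq_mul]; ring
      rw [this]; exact hx.1
    · have : a * α + b * β = x := by rw [← hab]; push_cast [zsmul_eq_mul]; ring
      rw [this]; exact hx.2
  · exfalso
    have hαm : α ∈ AddSubgroup.closure ({α, β} : Set ℝ) :=
      AddSubgroup.subset_closure (by simp)
    have hβm : β ∈ AddSubgroup.closure ({α, β} : Set ℝ) :=
      AddSubgroup.subset_closure (by simp)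
    rw [hg, AddSubgroup.mem_closure_singleton] at hαm hβm
    obtain ⟨m, hm⟩ := hαm
    obtain ⟨n, hn⟩ := hβm
    rw [zsmul_eq_mul] at hm hn
    have hg0 : g ≠ 0 := by
      rintro rfl; rw [mul_zero] at hm; exact hα.ne' hm.symm
    have hn0 : (n : ℝ) ≠ 0 := by
      rintro h; rw [h, zero_mul] at hn; exact hβ.ne' hn.symm
    exact hirr ⟨(m : ℚ) / n, by push_cast; rw [← hm, ← hn, mul_div_mul_right _ _ hg0]⟩


lemma tail_aux (α β ε δ : ℝ) (hα : 0 < α) (hβ : 0 < β) (A B : ℕ) (hA : 1 ≤ A) (hB : 1 ≤ B)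
    (hδdef : (A : ℝ) * α - (B : ℝ) * β = δ) (hδ0 : 0 < δ) (hδε : δ < ε) :
    ∃ K : ℝ, ∀ t : ℝ, K ≤ t → ∃ m n : ℕ,
      1 ≤ m + n ∧ t ≤ (m : ℝ) * α + n * β ∧ (m : ℝ) * α + n * β < t + ε := by
  set KK : ℕ := max ⌈β / δ⌉₊ 1 with hKKdef
  have hKK1 : 1 ≤ KK := le_max_right _ _
  have hKKδ : β ≤ (KK : ℝ) * δ := by
    have h1 : β / δ ≤ (⌈β / δ⌉₊ : ℝ) := Nat.le_ceil _
    have h2 : (⌈β / δ⌉₊ : ℝ) ≤ (KK : ℝ) := by exact_mod_cast Nat.le_max_left _ 1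
    calc β = (β / δ) * δ := by field_simp
      _ ≤ (KK : ℝ) * δ := by nlinarith
  refine ⟨(KK : ℝ) * B * β, fun t ht => ?_⟩
  set s := t - (KK : ℝ) * B * β with hsdef
  have hs0 : 0 ≤ s := by simp [hsdef]; linarith
  set j : ℕ := ⌊s / β⌋₊ with hjdef
  have hjle : (j : ℝ) * β ≤ s := by
    have := Nat.floor_le (show 0 ≤ s / β by positivity)
    calc (j : ℝ) * β ≤ (s / β) * β := by nlinarith
      _ = s := by field_simp
  have hjlt : s < ((j : ℝ) + 1) * β := by
    have := Nat.lt_floor_add_one (s / β)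
    calc s = (s / β) * β := by field_simp
      _ < ((j : ℝ) + 1) * β := by nlinarith
  set r := s - (j : ℝ) * β with hrdef
  have hr0 : 0 ≤ r := by simp [hrdef]; linarith
  have hrβ : r < β := by simp [hrdef]; linarith
  set k : ℕ := ⌈r / δ⌉₊ with hkdef
  have hkK : k ≤ KK := by
    rw [hkdef]
    refine Nat.ceil_le.2 ?_
    rw [div_le_iff₀ hδ0]
    linarith
  have hkr : r ≤ (k : ℝ) * δ := by
    have := Nat.le_ceil (r / δ)
    calc r = (r / δ) * δ := by field_simp
      _ ≤ (k : ℝ) * δ := by nlinarith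
  have hkr2 : (k : ℝ) * δ < r + δ := by
    have := Nat.ceil_lt_add_one (show 0 ≤ r / δ by positivity)
    have h2 : (k : ℝ) < r / δ + 1 := by exact_mod_cast this
    have h3 : (r / δ + 1) * δ = r + δ := by field_simp
    nlinarith [mul_lt_mul_of_pos_right h2 hδ0]
  refine ⟨k * A, (KK - k) * B + j, ?_, ?_, ?_⟩
  · rcases Nat.eq_zero_or_pos k with hk | hk
    · have h1 : 1 ≤ KK * B := Nat.one_le_iff_ne_zero.2 (by positivity)
      have h2 : (KK - k) * B = KK * B := by rw [hk]; simp
      omega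
    · have h1 : 1 ≤ k * A := Nat.one_le_iff_ne_zero.2 (by positivity)
      omega
  · have heq : ((k * A : ℕ) : ℝ) * α + (((KK - k) * B + j : ℕ) : ℝ) * β
        = (k : ℝ) * δ + (KK : ℝ) * B * β + (j : ℝ) * β := by
      push_cast [Nat.cast_sub hkK]
      linear_combination (k : ℝ) * hδdef
    rw [heq]
    have : t = s + (KK : ℝ) * B * β := by rw [hsdef]; ring
    linarith
  · have heq : ((k * A : ℕ) : ℝ) * α + (((KK - k) * B + j : ℕ) : ℝ) * β
        = (k : ℝ) * δ + (KK : ℝ) * B * β + (j : ℝ) * β := by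
      push_cast [Nat.cast_sub hkK]
      linear_combination (k : ℝ) * hδdef
    rw [heq]
    have : t = s + (KK : ℝ) * B * β := by rw [hsdef]; ring
    linarith

lemma tail_approx (α β : ℝ) (hα : 0 < α) (hβ : 0 < β) (hirr : Irrational (α / β)) :
    ∀ ε : ℝ, 0 < ε → ∃ K : ℝ, ∀ t : ℝ, K ≤ t → 0 ≤ t →
      ∃ m n : ℕ, 1 ≤ m + n ∧ t ≤ (m : ℝ) * α + n * β ∧ (m : ℝ) * α + n * β < t + ε := by
  intro ε hε
  obtain ⟨a, b, hpos, hlt⟩ := exists_small_pos_comb α β hα hβ hirr ε hε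
  rcases le_or_gt 0 a with ha | ha <;> rcases le_or_gt 0 b with hb | hb
  · -- both coefficients nonnegative
    obtain ⟨A, rfl⟩ : ∃ A : ℕ, a = (A : ℤ) := ⟨a.toNat, by omega⟩
    obtain ⟨B, rfl⟩ : ∃ B : ℕ, b = (B : ℤ) := ⟨b.toNat, by omega⟩
    push_cast at hpos hlt
    refine ⟨0, fun t _ ht0 => ?_⟩
    set δ : ℝ := (A : ℝ) * α + B * β with hδdef
    set k : ℕ := ⌊t / δ⌋₊ + 1 with hkdef
    have hcast : ((k * A : ℕ) : ℝ) * α + ((k * B : ℕ) : ℝ) * β = (k : ℝ) * δ := by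
      push_cast
      ring
    have hfl : ((⌊t / δ⌋₊ : ℕ) : ℝ) ≤ t / δ := Nat.floor_le (by positivity)
    have hfl2 : t / δ < ((⌊t / δ⌋₊ : ℕ) : ℝ) + 1 := Nat.lt_floor_add_one _
    have hdiv : (t / δ) * δ = t := by field_simp
    have hk1 : t < (k : ℝ) * δ := by
      have := mul_lt_mul_of_pos_right hfl2 hpos
      push_cast [hkdef]
      nlinarith
    have hk2 : (k : ℝ) * δ ≤ t + δ := by
      have := mul_le_mul_of_nonneg_right hfl hpos.le
      push_cast [hkdef]
      nlinarith
    refine ⟨k * A, k * B, ?_, by rw [hcast]; linarith, by rw [hcast]; linarith⟩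
    have hab1 : 1 ≤ A + B := by
      by_contra h
      have hA0 : A = 0 := by omega
      have hB0 : B = 0 := by omega
      rw [hδdef, hA0, hB0] at hpos
      simp at hpos
    have hk0 : 1 ≤ k := by omega
    simpa [Nat.mul_add] using Nat.mul_le_mul hk0 hab1
  · -- a ≥ 0, b < 0
    obtain ⟨A, rfl⟩ : ∃ A : ℕ, a = (A : ℤ) := ⟨a.toNat, by omega⟩
    obtain ⟨B, rfl⟩ : ∃ B : ℕ, b = -(B : ℤ) := ⟨(-b).toNat, by omega⟩
    push_cast at hpos hlt
    have hA : 1 ≤ A := by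
      rcases Nat.eq_zero_or_pos A with h | h
      · exfalso
        rw [h] at hpos
        have hB1 : (1 : ℝ) ≤ (B : ℝ) := by
          have : 1 ≤ B := by omega
          exact_mod_cast this
        simp at hpos
        nlinarith
      · exact h
    have hB : 1 ≤ B := by omega
    have hδdef : ((A : ℕ) : ℝ) * α - ((B : ℕ) : ℝ) * β = (A : ℝ) * α + (-(B : ℝ)) * β := by
      ring
    obtain ⟨K, hK⟩ := tail_aux α β ε _ hα hβ A B hA hB hδdef hpos hlt
    exact ⟨K, fun t ht _ => hK t ht⟩
  · -- a < 0, b ≥ 0 : swap roles of α and β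
    obtain ⟨A, rfl⟩ : ∃ A : ℕ, a = -(A : ℤ) := ⟨(-a).toNat, by omega⟩
    obtain ⟨B, rfl⟩ : ∃ B : ℕ, b = (B : ℤ) := ⟨b.toNat, by omega⟩
    push_cast at hpos hlt
    have hB : 1 ≤ B := by
      rcases Nat.eq_zero_or_pos B with h | h
      · exfalso
        rw [h] at hpos
        have hA1 : (1 : ℝ) ≤ (A : ℝ) := by
          have : 1 ≤ A := by omega
          exact_mod_cast this
        simp at hpos
        nlinarith
      · exact h
    have hA : 1 ≤ A := by omega
    have hδdef : ((B : ℕ) : ℝ) * β - ((A : ℕ) : ℝ) * α = (-(A : ℝ)) * α + (B : ℝ) * β := by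
      ring
    obtain ⟨K, hK⟩ := tail_aux β α ε _ hβ hα B A hB hA hδdef hpos hlt
    refine ⟨K, fun t ht _ => ?_⟩
    obtain ⟨m, n, h1, h2, h3⟩ := hK t ht
    exact ⟨n, m, by omega, by linarith, by linarith⟩
  · exfalso
    have ha1 : (a : ℝ) < 0 := by exact_mod_cast ha
    have hb1 : (b : ℝ) < 0 := by exact_mod_cast hb
    nlinarith

/-- Corollary 8 of the paper: in a strictly convex Banach space, if the
nonexpansive semigroup has `F(T(α)) ∩ F(T(β)) ≠ ∅` for positive `α, β` with
`α/β` irrational, then for every `λ ∈ (0,1)`,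
`⋂_{t ≥ 0} F(T(t)) = {z ∈ C : λ T(α)z + (1-λ) T(β)z = z}`. -/
theorem stmt_6 (E : Type*) [NormedAddCommGroup E] [NormedSpace ℝ E] [CompleteSpace E]
    (hsc : ∀ x y : E, ‖x‖ = 1 → ‖y‖ = 1 → x ≠ y → ‖x + y‖ / 2 < 1)
    (τ : TopologicalSpace E) (hτ : @T2Space E τ)
    (C : Set E) (T : ℝ → E → E)
    (hmaps : ∀ t : ℝ, 0 ≤ t → ∀ x ∈ C, T t x ∈ C)
    (hsg : ∀ s : ℝ, 0 ≤ s → ∀ t : ℝ, 0 ≤ t → ∀ x ∈ C, T (s + t) x = T s (T t x))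
    (hcont : ∀ x ∈ C, @ContinuousOn ℝ E _ τ (fun t => T t x) (Set.Ici 0))
    (hnonexp : ∀ t : ℝ, 0 ≤ t → ∀ x ∈ C, ∀ y ∈ C, ‖T t x - T t y‖ ≤ ‖x - y‖)
    (α β : ℝ) (hα : 0 < α) (hβ : 0 < β) (hirr : Irrational (α / β))
    (hcommon : ∃ w ∈ C, T α w = w ∧ T β w = w) :
    ∀ lam : ℝ, lam ∈ Set.Ioo (0 : ℝ) 1 →
      {x ∈ C | ∀ t : ℝ, 0 ≤ t → T t x = x}
        = {z ∈ C | lam • T α z + (1 - lam) • T β z = z} := by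
  intro lam hlam
  obtain ⟨hl0, hl1⟩ := hlam
  ext z
  simp only [Set.mem_setOf_eq]
  constructor
  · rintro ⟨hz, hfix⟩
    refine ⟨hz, ?_⟩
    rw [hfix α hα.le, hfix β hβ.le, ← add_smul]
    norm_num
  · rintro ⟨hz, heq⟩
    refine ⟨hz, ?_⟩
    obtain ⟨w, hwC, hwα, hwβ⟩ := hcommon
    -- strict convexity: z is a common fixed point of T α and T β
    haveI : StrictConvexSpace ℝ E := StrictConvexSpace.of_norm_add_ne_two
      (fun x y hx hy hxy => by
        have := hsc x y hx hy hxy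
        intro h
        rw [h] at this
        norm_num at this)
    have hαz : ‖T α z - w‖ ≤ ‖z - w‖ := by
      calc ‖T α z - w‖ = ‖T α z - T α w‖ := by rw [hwα]
        _ ≤ ‖z - w‖ := hnonexp α hα.le z hz w hwC
    have hβz : ‖T β z - w‖ ≤ ‖z - w‖ := by
      calc ‖T β z - w‖ = ‖T β z - T β w‖ := by rw [hwβ]
        _ ≤ ‖z - w‖ := hnonexp β hβ.le z hz w hwC
    have hcombo : lam • (T α z - w) + (1 - lam) • (T β z - w) = z - w := by
      rw [smul_sub, smul_sub]
      have h1 : lam • w + (1 - lam) • w = w := by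
        rw [← add_smul]; norm_num
      calc lam • T α z - lam • w + ((1 - lam) • T β z - (1 - lam) • w)
          = lam • T α z + (1 - lam) • T β z - (lam • w + (1 - lam) • w) := by abel
        _ = z - w := by rw [heq, h1]
    have hzα : T α z = z := by
      by_cases huv : T α z = T β z
      · rw [← huv, ← add_smul] at heq
        norm_num at heq
        exact heq
      · exfalso
        have hne : T α z - w ≠ T β z - w := fun h => huv (by
          have := congrArg (· + w) h
          simpa using this)
        have hlt := norm_combo_lt_of_ne (a := lam) (b := 1 - lam) hαz hβz hne hl0 (by linarith) (by ring)
        rw [hcombo] at hlt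
        exact lt_irrefl _ hlt
    have hzβ : T β z = z := by
      rw [hzα] at heq
      have h2 : (1 - lam) • T β z = (1 - lam) • z := by
        have h2' := congrArg (· - lam • z) heq
        rw [add_sub_cancel_left] at h2'
        rw [h2', sub_smul, one_smul]
      have h3 := smul_right_injective E (by linarith : (1 : ℝ) - lam ≠ 0) h2
      exact h3
    -- z is fixed by every m•α + n•β
    have hstep : ∀ s : ℝ, 0 ≤ s → T s z = z → ∀ c : ℝ, 0 ≤ c → T c z = z →
        T (s + c) z = z := by
      intro s hs hTs c hc hTc
      rw [hsg s hs c hc z hz, hTc, hTs]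
    have hfixm : ∀ m : ℕ, T (((m : ℝ) + 1) * α) z = z := by
      intro m
      induction m with
      | zero => simpa using hzα
      | succ k ih =>
        push_cast
        have h1 : ((k : ℝ) + 1 + 1) * α = ((k : ℝ) + 1) * α + α := by ring
        rw [h1]
        exact hstep _ (by positivity) ih α hα.le hzα
    have hfixn : ∀ n : ℕ, T (((n : ℝ) + 1) * β) z = z := by
      intro n
      induction n with
      | zero => simpa using hzβ
      | succ k ih =>
        push_cast
        have h1 : ((k : ℝ) + 1 + 1) * β = ((k : ℝ) + 1) * β + β := by ring
        rw [h1]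
        exact hstep _ (by positivity) ih β hβ.le hzβ
    have hfix : ∀ m n : ℕ, 1 ≤ m + n → T ((m : ℝ) * α + (n : ℝ) * β) z = z := by
      intro m n hmn
      match m, n with
      | 0, n + 1 =>
        have h1 : ((0 : ℕ) : ℝ) * α + ((n + 1 : ℕ) : ℝ) * β = ((n : ℝ) + 1) * β := by
          push_cast; ring
        rw [h1]; exact hfixn n
      | m + 1, 0 =>
        have h1 : (((m + 1 : ℕ)) : ℝ) * α + ((0 : ℕ) : ℝ) * β = ((m : ℝ) + 1) * α := by
          push_cast; ring
        rw [h1]; exact hfixm m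
      | m + 1, n + 1 =>
        have h1 : (((m + 1 : ℕ)) : ℝ) * α + ((n + 1 : ℕ) : ℝ) * β
            = ((m : ℝ) + 1) * α + ((n : ℝ) + 1) * β := by push_cast; ring
        rw [h1]
        exact hstep _ (by positivity) (hfixm m) _ (by positivity) (hfixn n)
    -- now fix t and show T t z = z
    intro t ht
    have hTtzC : T t z ∈ C := hmaps t ht z hz
    have key : ∀ ε : ℝ, 0 < ε → ∃ r : ℝ, 0 ≤ r ∧ r < ε ∧ T r (T t z) = z := by
      intro ε hε
      obtain ⟨K, hK⟩ := tail_approx α β hα hβ hirr ε hε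
      set N : ℕ := ⌈K / β⌉₊ + 1 with hNdef
      have hN1 : (1 : ℕ) ≤ N := by omega
      have hNβ : K ≤ (N : ℝ) * β := by
        have h1 : K / β ≤ (⌈K / β⌉₊ : ℝ) := Nat.le_ceil _
        have h2 : (⌈K / β⌉₊ : ℝ) ≤ (N : ℝ) - 1 := by
          push_cast [hNdef]; linarith
        have h3 : K = (K / β) * β := by field_simp
        nlinarith
      set t' : ℝ := t + (N : ℝ) * β with ht'def
      have ht'0 : 0 ≤ t' := by positivity
      have ht'K : K ≤ t' := by
        have : (0:ℝ) ≤ t := ht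
        simp only [ht'def]; linarith
      obtain ⟨m, n, h1, h2, h3⟩ := hK t' ht'K ht'0
      refine ⟨(m : ℝ) * α + n * β - t', by linarith, by linarith, ?_⟩
      have hTt' : T t' z = T t z := by
        have hNfix : T ((N : ℝ) * β) z = z := by
          have h4 : ((0 : ℕ) : ℝ) * α + ((N : ℕ) : ℝ) * β = (N : ℝ) * β := by
            push_cast; ring
          have := hfix 0 N (by omega)
          rwa [h4] at this
        rw [ht'def, hsg t ht ((N : ℝ) * β) (by positivity) z hz, hNfix]
      set r : ℝ := (m : ℝ) * α + n * β - t' with hrdef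
      have hr0 : 0 ≤ r := by simp only [hrdef]; linarith
      have h5 : T ((m : ℝ) * α + n * β) z = z := hfix m n h1
      have h6 : (m : ℝ) * α + n * β = r + t' := by simp only [hrdef]; ring
      rw [h6, hsg r hr0 t' ht'0 z hz, hTt'] at h5
      exact h5
    have hseq : ∀ k : ℕ, ∃ r : ℝ, 0 ≤ r ∧ r < 1 / ((k : ℝ) + 1) ∧ T r (T t z) = z :=
      fun k => key _ (by positivity)
    choose r hr0 hr1 hrT using hseq
    have h_tendsto : Tendsto r atTop (nhdsWithin (0 : ℝ) (Set.Ici 0)) := by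
      have h0 : Tendsto r atTop (nhds (0 : ℝ)) := by
        refine squeeze_zero hr0 (fun k => (hr1 k).le) ?_
        exact tendsto_one_div_add_atTop_nhds_zero_nat
      exact tendsto_nhdsWithin_of_tendsto_nhds_of_eventually_within r h0
        (Eventually.of_forall hr0)
    have hcw : @ContinuousWithinAt ℝ E _ τ (fun s => T s (T t z)) (Set.Ici 0) 0 :=
      hcont (T t z) hTtzC 0 Set.self_mem_Ici
    have h2 : Tendsto (fun k => T (r k) (T t z)) atTop (@nhds E τ (T 0 (T t z))) :=
      hcw.tendsto.comp h_tendsto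
    have h3 : Tendsto (fun k => T (r k) (T t z)) atTop (@nhds E τ z) := by
      have hconst : (fun k => T (r k) (T t z)) = fun _ => z := funext hrT
      rw [hconst]
      exact @tendsto_const_nhds E τ _ _ _
    have h4 : T 0 (T t z) = z := @tendsto_nhds_unique E ℕ τ hτ _ _ _ _ _ h2 h3
    have h5 : T (0 + t) z = T 0 (T t z) := hsg 0 le_rfl t ht z hz
    rw [zero_add] at h5
    rw [h5, h4]
end

section
/- Let C be a nonempty bounded closed convex subset of a Hilbert space E and let T be a nonexpansive mapping on C. Let x ∈ C and define a sequence {x_n} in C by x_n = (Tx + T²x + T³x + ⋯ + Tⁿx)/n for n ∈ ℕ. Then {x_n} converges weakly to a fixed point of T. -/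
set_option maxHeartbeats 1000000

open Filter Topology Finset
open scoped RealInnerProductSpace

section aux
variable {E : Type*} [NormedAddCommGroup E] [InnerProductSpace ℝ E]

lemma baillon_var_id {ι : Type*} (s : Finset ι) (lam : ι → ℝ) (hlam : ∑ k ∈ s, lam k = 1)
    (w : ι → E) (p : E) :
    ‖p - ∑ k ∈ s, lam k • w k‖ ^ 2 =
      (∑ k ∈ s, lam k * ‖p - w k‖ ^ 2)
        - (1/2) * ∑ k ∈ s, ∑ l ∈ s, lam k * lam l * ‖w k - w l‖ ^ 2 := by
  have hpw : ∀ y : E, ⟪p, ∑ k ∈ s, lam k • w k⟫ = ∑ k ∈ s, lam k * ⟪p, w k⟫ := by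
    intro y; rw [inner_sum]; exact Finset.sum_congr rfl fun k _ => real_inner_smul_right _ _ _
  have hWW : ⟪∑ k ∈ s, lam k • w k, ∑ l ∈ s, lam l • w l⟫
      = ∑ k ∈ s, ∑ l ∈ s, lam k * lam l * ⟪w k, w l⟫ := by
    rw [sum_inner]
    refine Finset.sum_congr rfl fun k _ => ?_
    rw [real_inner_smul_left, inner_sum, Finset.mul_sum]
    exact Finset.sum_congr rfl fun l _ => by rw [real_inner_smul_right]; ring
  have e1 : ∀ a b : E, ‖a - b‖ ^ 2 = ‖a‖^2 - 2*⟪a,b⟫ + ‖b‖^2 := fun a b => norm_sub_sq_real a b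
  rw [e1]
  have h2 : ∑ k ∈ s, lam k * ‖p - w k‖ ^ 2
      = ‖p‖^2 - 2 * (∑ k ∈ s, lam k * ⟪p, w k⟫) + ∑ k ∈ s, lam k * ‖w k‖^2 := by
    have : ∀ k ∈ s, lam k * ‖p - w k‖ ^ 2
        = lam k * ‖p‖^2 - 2 * (lam k * ⟪p, w k⟫) + lam k * ‖w k‖^2 := by
      intro k _; rw [e1]; ring
    rw [Finset.sum_congr rfl this, Finset.sum_add_distrib, Finset.sum_sub_distrib,
      ← Finset.sum_mul, hlam, ← Finset.mul_sum]
    ring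
  have h3 : ∑ k ∈ s, ∑ l ∈ s, lam k * lam l * ‖w k - w l‖ ^ 2
      = 2 * (∑ k ∈ s, lam k * ‖w k‖^2) - 2 * ∑ k ∈ s, ∑ l ∈ s, lam k * lam l * ⟪w k, w l⟫ := by
    have : ∀ k ∈ s, ∑ l ∈ s, lam k * lam l * ‖w k - w l‖ ^ 2
        = lam k * ‖w k‖^2 + lam k * (∑ l ∈ s, lam l * ‖w l‖^2)
          - 2 * ∑ l ∈ s, lam k * lam l * ⟪w k, w l⟫ := by
      intro k _
      have : ∀ l ∈ s, lam k * lam l * ‖w k - w l‖ ^ 2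
          = lam k * ‖w k‖^2 * lam l + lam k * (lam l * ‖w l‖^2)
            - 2 * (lam k * lam l * ⟪w k, w l⟫) := by
        intro l _; rw [e1]; ring
      rw [Finset.sum_congr rfl this, Finset.sum_sub_distrib, Finset.sum_add_distrib]
      simp only [← Finset.mul_sum]
      rw [hlam]
      ring
    rw [Finset.sum_congr rfl this, Finset.sum_sub_distrib, Finset.sum_add_distrib,
      ← Finset.sum_mul, hlam]
    ring_nf
    congr 1
    exact (Finset.sum_mul _ _ _).symm
  rw [hpw p, ← real_inner_self_eq_norm_sq (∑ k ∈ s, lam k • w k), hWW, h2, h3]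
  ring


end aux

/-- Baillon's nonlinear ergodic theorem: for a nonexpansive mapping `T` on a
nonempty bounded closed convex subset `C` of a Hilbert space, the Cesàro means
`x_n = (Tx + T²x + ⋯ + Tⁿx)/n` converge weakly to a fixed point of `T`. -/
theorem stmt_15 (E : Type*) [NormedAddCommGroup E] [InnerProductSpace ℝ E] [CompleteSpace E]
    (C : Set E) (hCne : C.Nonempty) (hCb : Bornology.IsBounded C)
    (hCcl : IsClosed C) (hCco : Convex ℝ C)
    (T : E → E) (hTmaps : ∀ x ∈ C, T x ∈ C)
    (hT : ∀ x ∈ C, ∀ y ∈ C, ‖T x - T y‖ ≤ ‖x - y‖)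
    (x : E) (hx : x ∈ C)
    (xs : ℕ → E)
    (hxs : ∀ n : ℕ, 1 ≤ n → xs n = ((n : ℝ)⁻¹) • ∑ k ∈ Finset.Icc 1 n, T^[k] x) :
    ∃ z ∈ C, T z = z ∧ ∀ y : E, Tendsto (fun n => ⟪xs n, y⟫) atTop (𝓝 ⟪z, y⟫) := by
  classical
  set v : ℕ → E := fun k => T^[k] x with hv
  have hvsucc : ∀ k, v (k + 1) = T (v k) := fun k => Function.iterate_succ_apply' T k x
  have hvC : ∀ k, v k ∈ C := by
    intro k; induction k with
    | zero => exact hx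
    | succ k ih => rw [hvsucc]; exact hTmaps _ ih
  set s : ℕ → E := fun n => ((n : ℝ)⁻¹) • ∑ k ∈ Finset.Icc 1 n, v k with hs
  obtain ⟨R₀, hR₀⟩ := hCb.subset_closedBall 0
  set R := max R₀ 0 with hRdef
  have hR0 : 0 ≤ R := le_max_right _ _
  have hRC : ∀ a ∈ C, ‖a‖ ≤ R := by
    intro a ha
    have := hR₀ ha
    rw [Metric.mem_closedBall, dist_zero_right] at this
    exact this.trans (le_max_left _ _)
  have hcard : ∀ n : ℕ, (Finset.Icc 1 n).card = n := by
    intro n; rw [Nat.card_Icc]; omega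
  have hlamsum : ∀ n : ℕ, 1 ≤ n → ∑ _k ∈ Finset.Icc 1 n, (n : ℝ)⁻¹ = 1 := by
    intro n hn
    rw [Finset.sum_const, hcard n, nsmul_eq_mul]
    field_simp
  have hs_eq : ∀ n, s n = ∑ k ∈ Finset.Icc 1 n, (n : ℝ)⁻¹ • v k := by
    intro n; rw [hs]; simp [Finset.smul_sum]
  have hsC : ∀ n, 1 ≤ n → s n ∈ C := by
    intro n hn
    rw [hs_eq]
    refine hCco.sum_mem (fun i _ => by positivity) (hlamsum n hn) (fun i _ => hvC i)
  have hs_norm : ∀ n, ‖s n‖ ≤ R := by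
    intro n
    rcases Nat.eq_zero_or_pos n with h | h
    · subst h; simp [hs, hR0]
    · exact hRC _ (hsC n h)
  -- mean of shifted orbit
  set b : ℕ → E := fun n => ∑ k ∈ Finset.Icc 1 n, (n : ℝ)⁻¹ • v (k + 1) with hb
  -- Step A : identity at p = s n
  have hA : ∀ n : ℕ, 1 ≤ n → ∑ k ∈ Finset.Icc 1 n, (n : ℝ)⁻¹ * ‖s n - v k‖ ^ 2
      = (1/2) * ∑ k ∈ Finset.Icc 1 n, ∑ l ∈ Finset.Icc 1 n,
          (n : ℝ)⁻¹ * (n : ℝ)⁻¹ * ‖v k - v l‖ ^ 2 := by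
    intro n hn
    have h := baillon_var_id (Finset.Icc 1 n) (fun _ => (n : ℝ)⁻¹) (hlamsum n hn) v (s n)
    rw [← hs_eq n, sub_self] at h
    simp only [norm_zero] at h
    linarith [h]
  -- Step B : identity at p = T (s n)
  have hB : ∀ n : ℕ, 1 ≤ n → ‖T (s n) - b n‖ ^ 2
      = (∑ k ∈ Finset.Icc 1 n, (n : ℝ)⁻¹ * ‖T (s n) - v (k + 1)‖ ^ 2)
        - (1/2) * ∑ k ∈ Finset.Icc 1 n, ∑ l ∈ Finset.Icc 1 n,
            (n : ℝ)⁻¹ * (n : ℝ)⁻¹ * ‖v (k + 1) - v (l + 1)‖ ^ 2 := by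
    intro n hn
    exact baillon_var_id (Finset.Icc 1 n) (fun _ => (n : ℝ)⁻¹) (hlamsum n hn)
      (fun k => v (k + 1)) (T (s n))
  -- Step C : termwise nonexpansiveness
  have hC : ∀ n : ℕ, 1 ≤ n → ‖T (s n) - b n‖ ^ 2
      ≤ (1/2) * ((∑ k ∈ Finset.Icc 1 n, ∑ l ∈ Finset.Icc 1 n,
            (n : ℝ)⁻¹ * (n : ℝ)⁻¹ * ‖v k - v l‖ ^ 2)
        - ∑ k ∈ Finset.Icc 1 n, ∑ l ∈ Finset.Icc 1 n,
            (n : ℝ)⁻¹ * (n : ℝ)⁻¹ * ‖v (k + 1) - v (l + 1)‖ ^ 2) := by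
    intro n hn
    have hterm : ∑ k ∈ Finset.Icc 1 n, (n : ℝ)⁻¹ * ‖T (s n) - v (k + 1)‖ ^ 2
        ≤ ∑ k ∈ Finset.Icc 1 n, (n : ℝ)⁻¹ * ‖s n - v k‖ ^ 2 := by
      refine Finset.sum_le_sum fun k _ => ?_
      have h1 : ‖T (s n) - v (k + 1)‖ ≤ ‖s n - v k‖ := by
        rw [hvsucc]; exact hT _ (hsC n hn) _ (hvC k)
      have h2 : ‖T (s n) - v (k + 1)‖ ^ 2 ≤ ‖s n - v k‖ ^ 2 := by
        nlinarith [norm_nonneg (T (s n) - v (k + 1))]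
      have : (0 : ℝ) ≤ (n : ℝ)⁻¹ := by positivity
      nlinarith
    have := hB n hn
    rw [this]
    have := hA n hn
    linarith
  -- Step D : shift bound for the double sums
  have hG4 : ∀ k l : ℕ, ‖v k - v l‖ ^ 2 ≤ 4 * R ^ 2 := by
    intro k l
    have h1 : ‖v k - v l‖ ≤ 2 * R := by
      calc ‖v k - v l‖ ≤ ‖v k‖ + ‖v l‖ := norm_sub_le _ _
      _ ≤ R + R := add_le_add (hRC _ (hvC k)) (hRC _ (hvC l))
      _ = 2 * R := by ring
    nlinarith [norm_nonneg (v k - v l)]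
  have hshift : ∀ n : ℕ, 1 ≤ n →
      (∑ k ∈ Finset.Icc 1 n, ∑ l ∈ Finset.Icc 1 n, ‖v k - v l‖ ^ 2)
        - (∑ k ∈ Finset.Icc 1 n, ∑ l ∈ Finset.Icc 1 n, ‖v (k + 1) - v (l + 1)‖ ^ 2)
      ≤ 8 * R ^ 2 * n := by
    intro n hn
    set G : ℕ × ℕ → ℝ := fun p => ‖v p.1 - v p.2‖ ^ 2 with hGdef
    have hGnn : ∀ p : ℕ × ℕ, 0 ≤ G p := fun p => sq_nonneg _
    set S : Finset (ℕ × ℕ) := Finset.Icc 1 n ×ˢ Finset.Icc 1 n with hSdef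
    set S' : Finset (ℕ × ℕ) := Finset.Icc 2 (n+1) ×ˢ Finset.Icc 2 (n+1) with hS'def
    have h1 : ∑ k ∈ Finset.Icc 1 n, ∑ l ∈ Finset.Icc 1 n, ‖v k - v l‖ ^ 2 = ∑ p ∈ S, G p :=
      (Finset.sum_product' _ _ _).symm
    have h2 : ∑ k ∈ Finset.Icc 1 n, ∑ l ∈ Finset.Icc 1 n, ‖v (k + 1) - v (l + 1)‖ ^ 2
        = ∑ p ∈ S', G p := by
      have himg : S.image (fun p : ℕ × ℕ => (p.1 + 1, p.2 + 1)) = S' := by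
        ext ⟨a, b⟩
        simp only [hSdef, hS'def, Finset.mem_image, Finset.mem_product, Finset.mem_Icc,
          Prod.mk.injEq, Prod.exists]
        constructor
        · rintro ⟨c, d, ⟨⟨h1, h2⟩, ⟨h3, h4⟩⟩, rfl, rfl⟩
          omega
        · rintro ⟨⟨h1, h2⟩, ⟨h3, h4⟩⟩
          exact ⟨a - 1, b - 1, by omega, by omega, by omega⟩
      rw [← himg, Finset.sum_image (by rintro ⟨a, b⟩ _ ⟨c, d⟩ _ h; simpa using h)]
      exact (Finset.sum_product' _ _ _).symm
    rw [h1, h2]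
    have h3 : ∑ p ∈ S, G p ≤ ∑ p ∈ S', G p + ∑ p ∈ S \ S', G p := by
      rw [← Finset.sum_union Finset.disjoint_sdiff]
      refine Finset.sum_le_sum_of_subset_of_nonneg ?_ (fun p _ _ => hGnn p)
      rw [Finset.union_sdiff_self_eq_union]
      exact Finset.subset_union_right
    have h4 : ∑ p ∈ S \ S', G p ≤ (2 * n) * (4 * R ^ 2) := by
      have hsub : S \ S' ⊆ ({1} ×ˢ Finset.Icc 1 n) ∪ (Finset.Icc 1 n ×ˢ {1}) := by
        intro p hp
        rw [Finset.mem_sdiff] at hp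
        obtain ⟨hpS, hpS'⟩ := hp
        simp only [hSdef, hS'def, Finset.mem_product, Finset.mem_Icc] at hpS hpS'
        simp only [Finset.mem_union, Finset.mem_product, Finset.mem_singleton, Finset.mem_Icc]
        omega
      calc ∑ p ∈ S \ S', G p ≤ ∑ p ∈ ({1} ×ˢ Finset.Icc 1 n) ∪ (Finset.Icc 1 n ×ˢ {1}), G p :=
            Finset.sum_le_sum_of_subset_of_nonneg hsub (fun p _ _ => hGnn p)
        _ ≤ (((({1} : Finset ℕ) ×ˢ Finset.Icc 1 n) ∪ (Finset.Icc 1 n ×ˢ {1})).card : ℝ) * (4 * R ^ 2) := by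
            have := Finset.sum_le_card_nsmul ((({1} : Finset ℕ) ×ˢ Finset.Icc 1 n) ∪ (Finset.Icc 1 n ×ˢ {1})) G (4 * R ^ 2)
              (fun p _ => hG4 p.1 p.2)
            rwa [nsmul_eq_mul] at this
        _ ≤ (2 * n) * (4 * R ^ 2) := by
            have hcard : ((({1} : Finset ℕ) ×ˢ Finset.Icc 1 n) ∪ (Finset.Icc 1 n ×ˢ {1})).card ≤ 2 * n := by
              calc ((({1} : Finset ℕ) ×ˢ Finset.Icc 1 n) ∪ (Finset.Icc 1 n ×ˢ {1})).card
                  ≤ (({1} : Finset ℕ) ×ˢ Finset.Icc 1 n).card + ((Finset.Icc 1 n ×ˢ ({1} : Finset ℕ)).card) :=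
                    Finset.card_union_le _ _
                _ ≤ 2 * n := by
                    rw [Finset.card_product, Finset.card_product]
                    simp [Nat.card_Icc]
                    omega
            have : (((({1} : Finset ℕ) ×ˢ Finset.Icc 1 n) ∪ (Finset.Icc 1 n ×ˢ {1})).card : ℝ) ≤ (2 * n : ℕ) := by
              exact_mod_cast hcard
            have h4R : (0:ℝ) ≤ 4 * R ^ 2 := by positivity
            push_cast at this ⊢
            nlinarith
    have h5 : (0:ℝ) ≤ ∑ p ∈ S' \ S, G p := Finset.sum_nonneg fun p _ => hGnn p
    have hnr : (1:ℝ) ≤ n := by exact_mod_cast hn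
    nlinarith [h3, h4]
  have hdefect2 : ∀ n : ℕ, 1 ≤ n → ‖T (s n) - b n‖ ^ 2 ≤ 4 * R ^ 2 / n := by
    intro n hn
    have hn' : (0 : ℝ) < n := by exact_mod_cast hn
    have h1 := hC n hn
    have h2 := hshift n hn
    have hfac : ∀ (w : ℕ → ℕ → E),
        ∑ k ∈ Finset.Icc 1 n, ∑ l ∈ Finset.Icc 1 n, (n : ℝ)⁻¹ * (n : ℝ)⁻¹ * ‖w k l‖ ^ 2
        = (n : ℝ)⁻¹ * (n : ℝ)⁻¹ *
            ∑ k ∈ Finset.Icc 1 n, ∑ l ∈ Finset.Icc 1 n, ‖w k l‖ ^ 2 := by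
      intro w
      rw [Finset.mul_sum]
      refine Finset.sum_congr rfl fun k _ => ?_
      rw [Finset.mul_sum]
    rw [hfac (fun k l => v k - v l), hfac (fun k l => v (k + 1) - v (l + 1))] at h1
    calc ‖T (s n) - b n‖ ^ 2
        ≤ (1/2) * ((n : ℝ)⁻¹ * (n : ℝ)⁻¹ * ((∑ k ∈ Finset.Icc 1 n, ∑ l ∈ Finset.Icc 1 n, ‖v k - v l‖ ^ 2)
            - ∑ k ∈ Finset.Icc 1 n, ∑ l ∈ Finset.Icc 1 n, ‖v (k + 1) - v (l + 1)‖ ^ 2)) := by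
          rw [mul_sub] at h1 ⊢; linarith
      _ ≤ (1/2) * ((n : ℝ)⁻¹ * (n : ℝ)⁻¹ * (8 * R ^ 2 * n)) := by
          have : (0 : ℝ) ≤ (n : ℝ)⁻¹ * (n : ℝ)⁻¹ := by positivity
          nlinarith
      _ = 4 * R ^ 2 / n := by field_simp; ring
  -- Step E : b n is close to s n, so s n is an approximate fixed point sequence
  have hEdiff : ∀ n : ℕ, 1 ≤ n → ‖b n - s n‖ ≤ 2 * R / n := by
    intro n hn
    have hn' : (0:ℝ) < n := by exact_mod_cast hn
    have h1 : b n - s n = ((n:ℝ)⁻¹) • (v (n + 1) - v 1) := by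
      rw [hs, hb]
      simp only
      rw [← Finset.smul_sum, ← smul_sub, ← Finset.sum_sub_distrib]
      congr 1
      have h2 : ∑ k ∈ Finset.Icc 1 n, (v (k + 1) - v k)
          = ∑ i ∈ Finset.range n, ((fun j => v (j + 1)) (i + 1) - (fun j => v (j + 1)) i) := by
        rw [show Finset.Icc 1 n = Finset.Ico 1 (n+1) from (Finset.Ico_add_one_right_eq_Icc 1 n).symm,
          Finset.sum_Ico_eq_sum_range]
        simp only [Nat.add_sub_cancel]
        refine Finset.sum_congr rfl fun i _ => ?_
        congr 1 <;> congr 1 <;> omega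
      rw [h2, Finset.sum_range_sub (fun j => v (j + 1))]
    rw [h1, norm_smul, Real.norm_eq_abs, abs_of_pos (by positivity)]
    have h3 : ‖v (n + 1) - v 1‖ ≤ 2 * R := by
      calc ‖v (n + 1) - v 1‖ ≤ ‖v (n+1)‖ + ‖v 1‖ := norm_sub_le _ _
        _ ≤ R + R := add_le_add (hRC _ (hvC _)) (hRC _ (hvC _))
        _ = 2 * R := by ring
    rw [div_eq_inv_mul]
    exact mul_le_mul_of_nonneg_left h3 (by positivity)
  have hafp : ∀ n : ℕ, 1 ≤ n → ‖s n - T (s n)‖ ≤ Real.sqrt (4 * R ^ 2 / n) + 2 * R / n := by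
    intro n hn
    have h1 : ‖T (s n) - b n‖ ≤ Real.sqrt (4 * R ^ 2 / n) := by
      have := hdefect2 n hn
      have hnn : (0:ℝ) ≤ ‖T (s n) - b n‖ := norm_nonneg _
      nlinarith [Real.sq_sqrt (by positivity : (0:ℝ) ≤ 4 * R ^ 2 / n),
        Real.sqrt_nonneg (4 * R ^ 2 / n)]
    calc ‖s n - T (s n)‖ ≤ ‖b n - s n‖ + ‖T (s n) - b n‖ := by
          have : s n - T (s n) = -(b n - s n) - (T (s n) - b n) := by abel
          rw [this]
          calc ‖-(b n - s n) - (T (s n) - b n)‖ ≤ ‖-(b n - s n)‖ + ‖T (s n) - b n‖ := norm_sub_le _ _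
            _ = ‖b n - s n‖ + ‖T (s n) - b n‖ := by rw [norm_neg]
      _ ≤ 2 * R / n + Real.sqrt (4 * R ^ 2 / n) := add_le_add (hEdiff n hn) h1
      _ = _ := by ring
  have hafp0 : Tendsto (fun n => ‖s n - T (s n)‖) atTop (𝓝 0) := by
    have hb : Tendsto (fun n : ℕ => Real.sqrt (4 * R ^ 2 / n) + 2 * R / n) atTop (𝓝 0) := by
      have h1 : Tendsto (fun n : ℕ => 4 * R ^ 2 / n) atTop (𝓝 0) :=
        tendsto_const_div_atTop_nhds_zero_nat _
      have h2 : Tendsto (fun n : ℕ => Real.sqrt (4 * R ^ 2 / n)) atTop (𝓝 0) := by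
        have := (Real.continuous_sqrt.tendsto 0).comp h1
        simpa only [Function.comp_def, Real.sqrt_zero] using this
      have h3 : Tendsto (fun n : ℕ => 2 * R / n) atTop (𝓝 0) :=
        tendsto_const_div_atTop_nhds_zero_nat _
      simpa using h2.add h3
    refine squeeze_zero' (Eventually.of_forall (fun n => norm_nonneg (s n - T (s n)))) ?_ hb
    filter_upwards [eventually_ge_atTop 1] with n hn
    exact hafp n hn
  -- inner products with s n
  have hsinner : ∀ n (y : E), ⟪s n, y⟫ = (n : ℝ)⁻¹ * ∑ k ∈ Finset.Icc 1 n, ⟪v k, y⟫ := by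
    intro n y
    rw [hs]
    simp only [real_inner_smul_left, sum_inner]
  -- bound on inner products
  have hsib : ∀ (y : E) n, |⟪s n, y⟫| ≤ R * ‖y‖ := by
    intro y n
    calc |⟪s n, y⟫| ≤ ‖s n‖ * ‖y‖ := abs_real_inner_le_norm _ _
      _ ≤ R * ‖y‖ := by
          have := hs_norm n
          have := norm_nonneg y
          nlinarith [norm_nonneg (s n)]
  -- KEY: ultrafilter weak limits are fixed points in C
  have key : ∀ V : Ultrafilter ℕ, (V : Filter ℕ) ≤ atTop →
      ∃ u ∈ C, T u = u ∧ ∀ y : E, Tendsto (fun n => ⟪s n, y⟫) V (𝓝 ⟪u, y⟫) := by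
    intro V hV
    have hlim : ∀ y : E, ∃ a : ℝ, Tendsto (fun n => ⟪s n, y⟫) V (𝓝 a) := by
      intro y
      have hmem : (V.map fun n => ⟪s n, y⟫ : Filter ℝ) ≤ 𝓟 (Set.Icc (-(R * ‖y‖)) (R * ‖y‖)) := by
        refine le_principal_iff.mpr (mem_map.mpr (univ_mem' fun n => ?_))
        have := hsib y n
        rw [Set.mem_preimage, Set.mem_Icc]
        constructor <;> [linarith [neg_abs_le (⟪s n, y⟫)]; linarith [le_abs_self (⟪s n, y⟫)]]
      obtain ⟨a, -, ha⟩ := isCompact_Icc.ultrafilter_le_nhds (V.map fun n => ⟪s n, y⟫) hmem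
      exact ⟨a, ha⟩
    choose ell hell using hlim
    have hadd : ∀ y z : E, ell (y + z) = ell y + ell z := by
      intro y z
      refine tendsto_nhds_unique ?_ ((hell y).add (hell z))
      have : (fun n => ⟪s n, y + z⟫) = fun n => ⟪s n, y⟫ + ⟪s n, z⟫ := by
        funext n; rw [inner_add_right]
      rw [← this]; exact hell _
    have hsmul : ∀ (c : ℝ) (y : E), ell (c • y) = c * ell y := by
      intro c y
      refine tendsto_nhds_unique ?_ ((hell y).const_mul c)
      have : (fun n => ⟪s n, c • y⟫) = fun n => c * ⟪s n, y⟫ := by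
        funext n; rw [real_inner_smul_right]
      rw [← this]; exact hell _
    have hbd : ∀ y : E, |ell y| ≤ R * ‖y‖ := by
      intro y
      have h1 : Tendsto (fun n => |⟪s n, y⟫|) V (𝓝 |ell y|) := (hell y).abs
      exact le_of_tendsto h1 (Eventually.of_forall fun n => hsib y n)
    let L : E →ₗ[ℝ] ℝ :=
      { toFun := ell, map_add' := hadd, map_smul' := hsmul }
    let L' : E →L[ℝ] ℝ := L.mkContinuous R (fun y => by
      rw [Real.norm_eq_abs]; exact hbd y)
    set u : E := (InnerProductSpace.toDual ℝ E).symm L' with hu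
    have huy : ∀ y : E, ⟪u, y⟫ = ell y := by
      intro y
      rw [hu, ← InnerProductSpace.toDual_apply_apply, LinearIsometryEquiv.apply_symm_apply]
      rfl
    have huten : ∀ y : E, Tendsto (fun n => ⟪s n, y⟫) V (𝓝 ⟪u, y⟫) := by
      intro y; rw [huy y]; exact hell y
    have hge1 : ∀ᶠ n in (V : Filter ℕ), 1 ≤ n := hV (eventually_ge_atTop 1)
    have huC : u ∈ C := by
      by_contra h
      obtain ⟨f, c, hfC, hcu⟩ := geometric_hahn_banach_closed_point hCco hCcl h
      set w : E := (InnerProductSpace.toDual ℝ E).symm f with hw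
      have hfw : ∀ z : E, f z = ⟪w, z⟫ := by
        intro z
        rw [hw, ← InnerProductSpace.toDual_apply_apply, LinearIsometryEquiv.apply_symm_apply]
      have h1 : Tendsto (fun n => ⟪s n, w⟫) V (𝓝 ⟪u, w⟫) := huten w
      have h2 : ⟪u, w⟫ ≤ c := by
        refine le_of_tendsto h1 ?_
        filter_upwards [hge1] with n hn
        have := hfC (s n) (hsC n hn)
        rw [hfw] at this
        rw [real_inner_comm]
        linarith
      rw [hfw, real_inner_comm] at hcu
      linarith
    have hTu : T u = u := by
      have hkey : ∀ n : ℕ, 1 ≤ n →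
          2 * ⟪s n - u, u - T u⟫ + ‖u - T u‖ ^ 2
            ≤ ‖s n - T (s n)‖ ^ 2 + 2 * ‖s n - T (s n)‖ * (2 * R) := by
        intro n hn
        have hd : ‖s n - u‖ ≤ 2 * R := by
          calc ‖s n - u‖ ≤ ‖s n‖ + ‖u‖ := norm_sub_le _ _
            _ ≤ R + R := add_le_add (hRC _ (hsC n hn)) (hRC _ huC)
            _ = 2 * R := by ring
        have h1 : ‖s n - T u‖ ≤ ‖s n - T (s n)‖ + ‖s n - u‖ := by
          calc ‖s n - T u‖ ≤ ‖s n - T (s n)‖ + ‖T (s n) - T u‖ := by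
                have : s n - T u = (s n - T (s n)) + (T (s n) - T u) := by abel
                rw [this]; exact norm_add_le _ _
            _ ≤ ‖s n - T (s n)‖ + ‖s n - u‖ := by
                have := hT (s n) (hsC n hn) u huC
                linarith
        have h2 : ‖s n - T u‖ ^ 2 = ‖s n - u‖ ^ 2 + 2 * ⟪s n - u, u - T u⟫ + ‖u - T u‖ ^ 2 := by
          have : s n - T u = (s n - u) + (u - T u) := by abel
          rw [this, norm_add_sq_real]
        have h3 : ‖s n - T u‖ ^ 2 ≤ (‖s n - T (s n)‖ + ‖s n - u‖) ^ 2 := by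
          nlinarith [norm_nonneg (s n - T u)]
        nlinarith [norm_nonneg (s n - T (s n)), norm_nonneg (s n - u)]
      have hlim1 : Tendsto (fun n => 2 * ⟪s n - u, u - T u⟫ + ‖u - T u‖ ^ 2) V
          (𝓝 (‖u - T u‖ ^ 2)) := by
        have h4 : Tendsto (fun n => ⟪s n - u, u - T u⟫) V (𝓝 0) := by
          have h5 : (fun n => ⟪s n - u, u - T u⟫)
              = fun n => ⟪s n, u - T u⟫ - ⟪u, u - T u⟫ := by
            funext n; rw [inner_sub_left]
          rw [h5]
          have := (huten (u - T u)).sub (tendsto_const_nhds (x := ⟪u, u - T u⟫))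
          simpa using this
        have := (h4.const_mul 2).add (tendsto_const_nhds (x := ‖u - T u‖ ^ 2))
        simpa using this
      have hlim2 : Tendsto (fun n => ‖s n - T (s n)‖ ^ 2 + 2 * ‖s n - T (s n)‖ * (2 * R)) V
          (𝓝 0) := by
        have h0 : Tendsto (fun n => ‖s n - T (s n)‖) V (𝓝 0) := hafp0.mono_left hV
        have := ((h0.pow 2).add (((h0.const_mul 2)).mul_const (2 * R)))
        simpa using this
      have hfinal : ‖u - T u‖ ^ 2 ≤ 0 := by
        refine le_of_tendsto_of_tendsto hlim1 hlim2 ?_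
        filter_upwards [hge1] with n hn
        exact hkey n hn
      have : ‖u - T u‖ = 0 := by nlinarith [norm_nonneg (u - T u)]
      have := norm_eq_zero.mp this
      rw [sub_eq_zero] at this
      exact this.symm
    exact ⟨u, huC, hTu, huten⟩
  -- convergence of inner products against differences of fixed points
  have hcesaro : ∀ f ∈ C, T f = f → ∀ g ∈ C, T g = g →
      ∃ L : ℝ, Tendsto (fun n => ⟪s n, f - g⟫) atTop (𝓝 L) := by
    have hdist : ∀ f ∈ C, T f = f → ∃ r : ℝ, Tendsto (fun k => ‖v k - f‖) atTop (𝓝 r) := by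
      intro f hf hTf
      have hanti : Antitone fun k => ‖v k - f‖ := by
        refine antitone_nat_of_succ_le fun k => ?_
        rw [hvsucc k]
        calc ‖T (v k) - f‖ = ‖T (v k) - T f‖ := by rw [hTf]
          _ ≤ ‖v k - f‖ := hT _ (hvC k) _ hf
      have hbdd : BddBelow (Set.range fun k => ‖v k - f‖) :=
        ⟨0, fun r ⟨k, hk⟩ => hk ▸ norm_nonneg _⟩
      exact ⟨_, tendsto_atTop_ciInf hanti hbdd⟩
    intro f hf hTf g hg hTg
    obtain ⟨rf, hrf⟩ := hdist f hf hTf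
    obtain ⟨rg, hrg⟩ := hdist g hg hTg
    set L0 : ℝ := (1/2) * (rg ^ 2 - rf ^ 2 + ‖f‖ ^ 2 - ‖g‖ ^ 2) with hL0
    have hform : ∀ k : ℕ, ⟪v k, f - g⟫
        = (1/2) * (‖v k - g‖ ^ 2 - ‖v k - f‖ ^ 2 + ‖f‖ ^ 2 - ‖g‖ ^ 2) := by
      intro k
      rw [inner_sub_right, norm_sub_sq_real, norm_sub_sq_real]
      ring
    have hvlim : Tendsto (fun k => ⟪v k, f - g⟫) atTop (𝓝 L0) := by
      have h1 := ((hrg.pow 2).sub (hrf.pow 2)).add_const (‖f‖ ^ 2)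
      have h2 := (h1.sub_const (‖g‖ ^ 2)).const_mul (1/2 : ℝ)
      refine h2.congr fun k => ?_
      rw [hform k]
    have hshift : Tendsto (fun i : ℕ => ⟪v (1 + i), f - g⟫) atTop (𝓝 L0) := by
      have h1 : Tendsto (fun i : ℕ => ⟪v (i + 1), f - g⟫) atTop (𝓝 L0) :=
        (tendsto_add_atTop_iff_nat 1).mpr hvlim
      refine h1.congr fun i => ?_
      rw [add_comm]
    refine ⟨L0, ?_⟩
    have hces := hshift.cesaro
    refine hces.congr fun n => ?_
    rw [hsinner n (f - g), show Finset.Icc 1 n = Finset.Ico 1 (n+1) from (Finset.Ico_add_one_right_eq_Icc 1 n).symm,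
      Finset.sum_Ico_eq_sum_range]
    simp only [Nat.add_sub_cancel]
  -- assembly
  have hne : (atTop : Filter ℕ).NeBot := atTop_neBot
  set U : Ultrafilter ℕ := Ultrafilter.of atTop with hU
  have hUle : (U : Filter ℕ) ≤ atTop := Ultrafilter.of_le _
  obtain ⟨z, hzC, hzT, hz⟩ := key U hUle
  refine ⟨z, hzC, hzT, fun y => ?_⟩
  have hxseq : (fun n => ⟪xs n, y⟫) =ᶠ[atTop] fun n => ⟪s n, y⟫ := by
    filter_upwards [eventually_ge_atTop 1] with n hn
    rw [hxs n hn]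
  rw [tendsto_congr' hxseq, tendsto_iff_ultrafilter]
  intro V hV
  obtain ⟨u, huC, huT, hu⟩ := key V hV
  have huz : u = z := by
    obtain ⟨L, hL⟩ := hcesaro z hzC hzT u huC huT
    have e1 : ⟪z, z - u⟫ = L := tendsto_nhds_unique (hz (z - u)) (hL.mono_left hUle)
    have e2 : ⟪u, z - u⟫ = L := tendsto_nhds_unique (hu (z - u)) (hL.mono_left hV)
    have e3 : ⟪z - u, z - u⟫ = (0 : ℝ) := by
      rw [inner_sub_left]; rw [e1, e2]; ring
    have := inner_self_eq_zero.mp e3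
    have : z = u := by rwa [sub_eq_zero] at this
    exact this.symm
  rw [← huz]
  exact hu y
end

section
/- Let C be a nonempty bounded closed convex subset of a Hilbert space E, let T be a nonexpansive mapping on C, and let {λ_n} be a sequence in (0,1) converging to 0. Fix u ∈ C and let {x_n} be a sequence in C satisfying x_n = (1−λ_n)·Tx_n + λ_n·u for all n ∈ ℕ. Then {x_n} converges strongly (in norm) to a fixed point of T. -/
open Filter Topology

open RealInnerProductSpace

private lemma limsup_comb_aux {a b f : ℕ → ℝ} {p q r : ℝ} (hp : 0 ≤ p) (hq : 0 ≤ q)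
    (hf : Filter.IsCoboundedUnder (· ≤ ·) Filter.atTop f)
    (ha : Filter.IsBoundedUnder (· ≤ ·) Filter.atTop a)
    (hb : Filter.IsBoundedUnder (· ≤ ·) Filter.atTop b)
    (h : ∀ᶠ n in Filter.atTop, f n ≤ p * a n + q * b n + r) :
    Filter.limsup f Filter.atTop ≤
      p * Filter.limsup a Filter.atTop + q * Filter.limsup b Filter.atTop + r := by
  have key : ∀ ε : ℝ, 0 < ε →
      limsup f atTop ≤ p * limsup a atTop + q * limsup b atTop + r + (p + q) * ε := by
    intro ε hε
    have haε : ∀ᶠ n in atTop, a n < limsup a atTop + ε :=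
      eventually_lt_of_limsup_lt (by linarith) ha
    have hbε : ∀ᶠ n in atTop, b n < limsup b atTop + ε :=
      eventually_lt_of_limsup_lt (by linarith) hb
    refine limsup_le_of_le hf ?_
    filter_upwards [h, haε, hbε] with n h1 h2 h3
    nlinarith [mul_le_mul_of_nonneg_left h2.le hp, mul_le_mul_of_nonneg_left h3.le hq]
  by_contra hcon
  push_neg at hcon
  set S := p * limsup a atTop + q * limsup b atTop + r with hS
  have hD : 0 < limsup f atTop - S := by linarith
  have hk := key ((limsup f atTop - S) / (p + q + 1)) (by positivity)
  have h1 : (p + q) / (p + q + 1) < 1 := (div_lt_one (by linarith)).2 (by linarith)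
  have hlt : (p + q) * ((limsup f atTop - S) / (p + q + 1)) < limsup f atTop - S := by
    calc (p + q) * ((limsup f atTop - S) / (p + q + 1))
        = ((p + q) / (p + q + 1)) * (limsup f atTop - S) := by ring
      _ < 1 * (limsup f atTop - S) := mul_lt_mul_of_pos_right h1 hD
      _ = limsup f atTop - S := one_mul _
  linarith

private lemma mid_norm_sq {E : Type*} [NormedAddCommGroup E] [InnerProductSpace ℝ E]
    (w y y' : E) :
    ‖w - ((1/2 : ℝ) • y + (1/2 : ℝ) • y')‖ ^ 2
      = ‖w - y‖ ^ 2 / 2 + ‖w - y'‖ ^ 2 / 2 - ‖y - y'‖ ^ 2 / 4 := by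
  have hpar := parallelogram_law_with_norm ℝ (w - y) (w - y')
  have hmid : w - ((1/2 : ℝ) • y + (1/2 : ℝ) • y') = (1/2 : ℝ) • ((w - y) + (w - y')) := by
    module
  have h1 : ‖w - ((1/2 : ℝ) • y + (1/2 : ℝ) • y')‖ = (1/2) * ‖(w - y) + (w - y')‖ := by
    rw [hmid, norm_smul]; simp
  have h2 : (w - y) - (w - y') = -(y - y') := by abel
  have h3 : ‖(w - y) - (w - y')‖ = ‖y - y'‖ := by rw [h2, norm_neg]
  have hpar' : ‖(w - y) + (w - y')‖ ^ 2 + ‖y - y'‖ ^ 2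
      = 2 * (‖w - y‖ ^ 2 + ‖w - y'‖ ^ 2) := by
    rw [← h3]; simpa [pow_two] using hpar
  rw [h1]
  nlinarith [hpar']


set_option maxHeartbeats 1000000 in
/-- Browder's theorem: for a nonexpansive mapping `T` on a nonempty bounded
closed convex subset `C` of a Hilbert space, the implicit sequence
`x_n = (1-λ_n) T x_n + λ_n u` with `λ_n → 0` converges strongly to a fixed
point of `T`. -/
theorem stmt_17 (E : Type*) [NormedAddCommGroup E] [InnerProductSpace ℝ E] [CompleteSpace E]
    (C : Set E) (hCne : C.Nonempty) (hCb : Bornology.IsBounded C)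
    (hCcl : IsClosed C) (hCco : Convex ℝ C)
    (T : E → E) (hTmaps : ∀ x ∈ C, T x ∈ C)
    (hT : ∀ x ∈ C, ∀ y ∈ C, ‖T x - T y‖ ≤ ‖x - y‖)
    (l : ℕ → ℝ) (hl : ∀ n, 1 ≤ n → l n ∈ Set.Ioo (0 : ℝ) 1)
    (hllim : Tendsto l atTop (𝓝 0))
    (u : E) (hu : u ∈ C)
    (xs : ℕ → E) (hxsC : ∀ n, 1 ≤ n → xs n ∈ C)
    (hxs : ∀ n : ℕ, 1 ≤ n → xs n = (1 - l n) • T (xs n) + l n • u) :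
    ∃ z ∈ C, T z = z ∧ Tendsto xs atTop (𝓝 z) := by
  obtain ⟨R, hR⟩ := isBounded_iff_forall_norm_le.1 hCb
  obtain ⟨x0, hx0⟩ := hCne
  have hR0 : 0 ≤ R := le_trans (norm_nonneg x0) (hR x0 hx0)
  have hdist : ∀ x ∈ C, ∀ y ∈ C, ‖x - y‖ ≤ 2 * R := by
    intro x hx y hy
    calc ‖x - y‖ ≤ ‖x‖ + ‖y‖ := norm_sub_le _ _
      _ ≤ 2 * R := by have := hR x hx; have := hR y hy; linarith
  set A : E → ℕ → ℝ := fun x n => ‖xs n - x‖ ^ 2 with hA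
  set φ : E → ℝ := fun x => Filter.limsup (A x) Filter.atTop with hφdef
  have hgeA : ∀ x : E, ∀ n, 0 ≤ A x n := fun x n => sq_nonneg _
  have hbddA : ∀ x ∈ C, Filter.IsBoundedUnder (· ≤ ·) Filter.atTop (A x) := by
    intro x hx
    refine isBoundedUnder_of_eventually_le (a := (2 * R) ^ 2) ?_
    filter_upwards [eventually_ge_atTop 1] with n hn
    have h1 := hdist _ (hxsC n hn) _ hx
    have h2 := norm_nonneg (xs n - x)
    simp only [hA]
    nlinarith
  have hcobA : ∀ x : E, Filter.IsCoboundedUnder (· ≤ ·) Filter.atTop (A x) := fun x =>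
    (isBoundedUnder_of_eventually_ge (a := 0)
      (Eventually.of_forall (hgeA x))).isCoboundedUnder_le
  have hφ0 : ∀ x ∈ C, 0 ≤ φ x := fun x hx =>
    le_limsup_of_frequently_le ((Eventually.of_forall (hgeA x)).frequently) (hbddA x hx)
  have hmidC : ∀ y ∈ C, ∀ y' ∈ C, (1/2 : ℝ) • y + (1/2 : ℝ) • y' ∈ C := fun y hy y' hy' =>
    hCco hy hy' (by norm_num) (by norm_num) (by norm_num)
  have hkey : ∀ y ∈ C, ∀ y' ∈ C,
      φ ((1/2 : ℝ) • y + (1/2 : ℝ) • y') ≤ φ y / 2 + φ y' / 2 - ‖y - y'‖ ^ 2 / 4 := by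
    intro y hy y' hy'
    have hpt : ∀ n, A ((1/2 : ℝ) • y + (1/2 : ℝ) • y') n
        ≤ (1/2) * A y n + (1/2) * A y' n + (-(‖y - y'‖ ^ 2 / 4)) := by
      intro n
      have h := mid_norm_sq (xs n) y y'
      simp only [hA]
      linarith
    have h := limsup_comb_aux (p := 1/2) (q := 1/2) (r := -(‖y - y'‖ ^ 2 / 4))
      (by norm_num) (by norm_num) (hcobA _) (hbddA y hy) (hbddA y' hy')
      (Eventually.of_forall hpt)
    simp only [hφdef]
    linarith
  -- infimum
  have hSne : (φ '' C).Nonempty := ⟨φ x0, ⟨x0, hx0, rfl⟩⟩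
  have hSbd : BddBelow (φ '' C) := ⟨0, by rintro v ⟨x, hx, rfl⟩; exact hφ0 x hx⟩
  set d := sInf (φ '' C) with hd
  have hdle : ∀ x ∈ C, d ≤ φ x := fun x hx => csInf_le hSbd ⟨x, hx, rfl⟩
  have hdge : 0 ≤ d := le_csInf hSne (by rintro v ⟨x, hx, rfl⟩; exact hφ0 x hx)
  -- minimizing sequence
  have hmin : ∀ k : ℕ, ∃ y ∈ C, φ y < d + 1 / ((k : ℝ) + 1) := by
    intro k
    obtain ⟨v, hv, hvlt⟩ := Real.lt_sInf_add_pos hSne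
      (show (0:ℝ) < 1 / ((k : ℝ) + 1) by positivity)
    obtain ⟨yy, hyy, rfl⟩ := hv
    exact ⟨yy, hyy, hvlt⟩
  choose y hyC hyφ using hmin
  have hcauchy : CauchySeq y := by
    rw [Metric.cauchySeq_iff]
    intro ε hε
    obtain ⟨N, hN⟩ := exists_nat_gt (4 / ε ^ 2)
    refine ⟨N, fun k hk m hm => ?_⟩
    have h1 := hkey _ (hyC k) _ (hyC m)
    have h2 := hdle _ (hmidC _ (hyC k) _ (hyC m))
    have h3 := hyφ k
    have h4 := hyφ m
    have hk1 : 1 / ((k : ℝ) + 1) ≤ 1 / ((N : ℝ) + 1) := by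
      apply one_div_le_one_div_of_le (by positivity)
      have : (N : ℝ) ≤ (k : ℝ) := by exact_mod_cast hk
      linarith
    have hm1 : 1 / ((m : ℝ) + 1) ≤ 1 / ((N : ℝ) + 1) := by
      apply one_div_le_one_div_of_le (by positivity)
      have : (N : ℝ) ≤ (m : ℝ) := by exact_mod_cast hm
      linarith
    have hε2 : (0:ℝ) < ε ^ 2 := by positivity
    have hN1 : (0:ℝ) < (N : ℝ) + 1 := by positivity
    have hNlt : 1 / ((N : ℝ) + 1) < ε ^ 2 / 4 := by
      rw [div_lt_div_iff₀ hN1 (by norm_num : (0:ℝ) < 4)]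
      have h5 : 4 / ε ^ 2 < (N : ℝ) + 1 := by linarith
      rw [div_lt_iff₀ hε2] at h5
      nlinarith
    have hsq : ‖y k - y m‖ ^ 2 < ε ^ 2 := by linarith
    rw [dist_eq_norm]
    exact lt_of_pow_lt_pow_left₀ 2 hε.le hsq
  obtain ⟨z, hz⟩ := cauchySeq_tendsto_of_complete hcauchy
  have hzC : z ∈ C := hCcl.mem_of_tendsto hz (Eventually.of_forall hyC)
  -- φ z = d
  have hφcont : ∀ w ∈ C, ∀ v ∈ C, φ w ≤ φ v + 8 * R * ‖w - v‖ := by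
    intro w hw v hv
    have hpt : ∀ᶠ n in atTop, A w n ≤ 1 * A v n + 0 * A v n + 8 * R * ‖w - v‖ := by
      filter_upwards [eventually_ge_atTop 1] with n hn
      have h1 : ‖xs n - w‖ ≤ ‖xs n - v‖ + ‖v - w‖ := norm_sub_le_norm_sub_add_norm_sub _ _ _
      have ha := hdist _ (hxsC n hn) _ hv
      have hb : ‖v - w‖ ≤ 2 * R := hdist _ hv _ hw
      have hna := norm_nonneg (xs n - v)
      have hnb := norm_nonneg (v - w)
      have hnw := norm_nonneg (xs n - w)
      have hrev : ‖w - v‖ = ‖v - w‖ := norm_sub_rev _ _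
      have hsq := pow_le_pow_left₀ hnw h1 2
      simp only [hA]
      rw [hrev]
      nlinarith [mul_le_mul_of_nonneg_right ha hnb, mul_le_mul_of_nonneg_right hb hnb,
        mul_nonneg hR0 hnb]
    have h := limsup_comb_aux (p := 1) (q := 0) zero_le_one le_rfl
      (hcobA _) (hbddA _ hv) (hbddA _ hv) hpt
    simp only [hφdef]
    linarith
  have hφzd : φ z = d := by
    refine le_antisymm ?_ (hdle z hzC)
    have hzn : Tendsto (fun k => ‖z - y k‖) atTop (𝓝 0) := by
      have h := tendsto_iff_norm_sub_tendsto_zero.mp hz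
      exact h.congr fun k => norm_sub_rev _ _
    have hlim : Tendsto (fun k : ℕ => d + 1 / ((k : ℝ) + 1) + 8 * R * ‖z - y k‖) atTop
        (𝓝 (d + 0 + 8 * R * 0)) := by
      exact (tendsto_const_nhds.add tendsto_one_div_add_atTop_nhds_zero_nat).add
        (tendsto_const_nhds.mul hzn)
    rw [show d + 0 + 8 * R * 0 = d by ring] at hlim
    refine ge_of_tendsto hlim (Eventually.of_forall fun k : ℕ => ?_)
    have := hφcont z hzC (y k) (hyC k)
    have := hyφ k
    linarith
  -- approximate fixed point sequence
  set eps : ℕ → ℝ := fun n => ‖xs n - T (xs n)‖ with hepsdef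
  have hepslim : Tendsto eps atTop (𝓝 0) := by
    have hg : Tendsto (fun n => l n * (2 * R)) atTop (𝓝 (0 * (2 * R))) := hllim.mul_const _
    rw [zero_mul] at hg
    refine squeeze_zero' (Eventually.of_forall fun n => norm_nonneg _) ?_ hg
    filter_upwards [eventually_ge_atTop 1] with n hn
    have h := hxs n hn
    have hid : xs n - T (xs n) = l n • (u - T (xs n)) := by
      have h2 : xs n - T (xs n) = ((1 - l n) • T (xs n) + l n • u) - T (xs n) :=
        congrArg (fun w => w - T (xs n)) h
      rw [h2]; module
    have hln := (hl n hn).1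
    have hduT : ‖u - T (xs n)‖ ≤ 2 * R := hdist _ hu _ (hTmaps _ (hxsC n hn))
    simp only [hepsdef]
    rw [hid, norm_smul, Real.norm_eq_abs, abs_of_pos hln]
    exact mul_le_mul_of_nonneg_left hduT hln.le
  -- fixed point
  have hTzC : T z ∈ C := hTmaps z hzC
  have hφTz : φ (T z) ≤ φ z := by
    refine le_of_forall_pos_le_add fun η hη => ?_
    have hevε : ∀ᶠ n in atTop, eps n * (4 * R + 1) < η := by
      have h : Tendsto (fun n => eps n * (4 * R + 1)) atTop (𝓝 (0 * (4 * R + 1))) :=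
        hepslim.mul_const _
      rw [zero_mul] at h
      exact h.eventually_lt_const hη
    have hev1 : ∀ᶠ n in atTop, eps n < 1 := hepslim.eventually_lt_const one_pos
    have hev : ∀ᶠ n in atTop, A (T z) n ≤ 1 * A z n + 0 * A z n + η := by
      filter_upwards [hevε, hev1, eventually_ge_atTop 1] with n hn1 hn2 hn3
      have h1 : ‖xs n - T z‖ ≤ eps n + ‖xs n - z‖ := by
        calc ‖xs n - T z‖ ≤ ‖xs n - T (xs n)‖ + ‖T (xs n) - T z‖ :=
              norm_sub_le_norm_sub_add_norm_sub _ _ _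
          _ ≤ eps n + ‖xs n - z‖ := add_le_add le_rfl (hT _ (hxsC n hn3) _ hzC)
      have hdz : ‖xs n - z‖ ≤ 2 * R := hdist _ (hxsC n hn3) _ hzC
      have hepsnn : 0 ≤ eps n := norm_nonneg _
      have hnw := norm_nonneg (xs n - T z)
      have hsq := pow_le_pow_left₀ hnw h1 2
      simp only [hA]
      nlinarith [mul_le_mul_of_nonneg_left hdz hepsnn, mul_le_mul_of_nonneg_left hn2.le hepsnn]
    have h := limsup_comb_aux (p := 1) (q := 0) zero_le_one le_rfl
      (hcobA _) (hbddA _ hzC) (hbddA _ hzC) hev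
    simp only [hφdef]
    linarith
  have hTz : T z = z := by
    have h1 := hkey _ hzC _ hTzC
    have h2 := hdle _ (hmidC _ hzC _ hTzC)
    have h3 : ‖z - T z‖ ^ 2 ≤ 0 := by
      have h4 := hdle _ hTzC
      linarith [hφTz, hφzd, h1, h2]
    have h5 : ‖z - T z‖ ^ 2 = 0 := le_antisymm h3 (sq_nonneg _)
    have h6 : ‖z - T z‖ = 0 := by
      have := sq_eq_zero_iff.mp h5
      exact this
    have h7 : z - T z = 0 := norm_eq_zero.mp h6
    have := sub_eq_zero.mp h7
    exact this.symm
  -- key inequality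
  have hineq : ∀ n, 1 ≤ n → ‖xs n - z‖ ^ 2 ≤ ⟪u - z, xs n - z⟫ := by
    intro n hn
    have hln := hl n hn
    have hdecomp : xs n - z = (1 - l n) • (T (xs n) - z) + l n • (u - z) := by
      have h2 : xs n - z = ((1 - l n) • T (xs n) + l n • u) - z :=
        congrArg (fun w => w - z) (hxs n hn)
      rw [h2]; module
    have hinner : (‖xs n - z‖ ^ 2 : ℝ)
        = (1 - l n) * ⟪T (xs n) - z, xs n - z⟫ + l n * ⟪u - z, xs n - z⟫ := by
      rw [← real_inner_self_eq_norm_sq]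
      nth_rewrite 1 [hdecomp]
      rw [inner_add_left, real_inner_smul_left, real_inner_smul_left]
    have hw1 : ⟪T (xs n) - z, xs n - z⟫ ≤ ‖xs n - z‖ ^ 2 := by
      have hcs := real_inner_le_norm (T (xs n) - z) (xs n - z)
      have hne : ‖T (xs n) - z‖ ≤ ‖xs n - z‖ := by
        have := hT _ (hxsC n hn) _ hzC
        rwa [hTz] at this
      have := norm_nonneg (xs n - z)
      nlinarith
    nlinarith [hln.1, hln.2, mul_le_mul_of_nonneg_left hw1 (by linarith [hln.2] : (0:ℝ) ≤ 1 - l n)]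
  -- final parametrized inequality
  set cu := ‖u - z‖ ^ 2 with hcu
  have hstep : ∀ s : ℝ, 0 < s → s < 1/2 → d ≤ s * cu / 2 := by
    intro s hs hs2
    have hwC : (1 - s) • z + s • u ∈ C := hCco hzC hu (by linarith) hs.le (by ring)
    have hev : ∀ᶠ n in atTop, A ((1 - s) • z + s • u) n
        ≤ (1 - 2 * s) * A z n + 0 * A z n + s ^ 2 * cu := by
      filter_upwards [eventually_ge_atTop 1] with n hn
      have hkey6 := hineq n hn
      have hxw : xs n - ((1 - s) • z + s • u) = (xs n - z) - s • (u - z) := by module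
      have hexp : ‖(xs n - z) - s • (u - z)‖ ^ 2
          = ‖xs n - z‖ ^ 2 - 2 * s * ⟪u - z, xs n - z⟫ + s ^ 2 * cu := by
        rw [norm_sub_sq_real, real_inner_smul_right, norm_smul, Real.norm_eq_abs, mul_pow,
          sq_abs, real_inner_comm]
        ring
      simp only [hA]
      rw [hxw, hexp]
      nlinarith [mul_le_mul_of_nonneg_left hkey6 (by linarith : (0:ℝ) ≤ 2 * s)]
    have h := limsup_comb_aux (p := 1 - 2 * s) (q := 0) (by linarith) le_rfl
      (hcobA _) (hbddA _ hzC) (hbddA _ hzC) hev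
    have h2 := hdle _ hwC
    simp only [hφdef] at h2 hφzd
    rw [hφzd] at h
    have h3 : 2 * s * d ≤ s ^ 2 * cu := by linarith [h, h2]
    nlinarith [h3, hs]
  have hd0 : d ≤ 0 := by
    have hlim : Tendsto (fun k : ℕ => (1 / ((k : ℝ) + 3)) * cu / 2) atTop (𝓝 0) := by
      have h1 : Tendsto (fun k : ℕ => ((k : ℝ) + 3)) atTop atTop :=
        tendsto_atTop_add_const_right atTop 3 tendsto_natCast_atTop_atTop
      have h2 : Tendsto (fun k : ℕ => 1 / ((k : ℝ) + 3)) atTop (𝓝 0) := by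
        simpa [one_div, Pi.inv_def] using h1.inv_tendsto_atTop
      have h3 := (h2.mul_const cu).div_const 2
      simpa using h3
    refine ge_of_tendsto hlim (Eventually.of_forall fun k => ?_)
    refine hstep _ (by positivity) ?_
    have : (1 : ℝ) / ((k : ℝ) + 3) ≤ 1 / 3 := by
      apply one_div_le_one_div_of_le (by norm_num)
      have : (0:ℝ) ≤ (k : ℝ) := Nat.cast_nonneg k
      linarith
    linarith
  have hdeq : d = 0 := le_antisymm hd0 hdge
  -- conclude convergence
  refine ⟨z, hzC, hTz, ?_⟩
  have hconv : Tendsto (A z) atTop (𝓝 0) := by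
    refine tendsto_of_le_liminf_of_limsup_le ?_ ?_ (hbddA z hzC)
      (isBoundedUnder_of_eventually_ge (a := 0) (Eventually.of_forall (hgeA z)))
    · exact le_liminf_of_le (hbddA z hzC).isCoboundedUnder_ge
        (Eventually.of_forall (hgeA z))
    · rw [show limsup (A z) atTop = φ z from rfl, hφzd, hdeq]
  have hnorm : Tendsto (fun n => ‖xs n - z‖) atTop (𝓝 0) := by
    have h := (Real.continuous_sqrt.tendsto 0).comp hconv
    rw [Real.sqrt_zero] at h
    refine h.congr fun n => ?_
    simp only [Function.comp, hA]
    exact Real.sqrt_sq (norm_nonneg _)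
  exact tendsto_iff_norm_sub_tendsto_zero.mpr hnorm
end

section
/- Let C be a nonempty bounded closed convex subset of a Hilbert space E and let T be a nonexpansive mapping on C. Let u ∈ C and define a sequence {x_n} in C by x_1 ∈ C and x_{n+1} = (1−λ_n)·Tx_n + λ_n·u for n ∈ ℕ, where {λ_n} is a sequence in [0,1] satisfying lim_n λ_n = 0, Σ_{n=1}^∞ λ_n = ∞, and Σ_{n=1}^∞ |λ_{n+1} − λ_n| < ∞. Then {x_n} converges strongly (in norm) to a fixed point of T. -/
open Filter Topology
open scoped RealInnerProductSpace


lemma lemA (s lam beta c : ℕ → ℝ) (B : ℝ)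
    (hs0 : ∀ n, 0 ≤ s n) (hsB : ∀ n, s n ≤ B)
    (hlam : ∀ n, lam n ∈ Set.Icc (0:ℝ) 1)
    (hc0 : ∀ n, 0 ≤ c n) (hcsum : Summable c)
    (hbeta : ∀ ε > 0, ∀ᶠ n in atTop, beta n ≤ ε)
    (hrec : ∀ n, s (n+1) ≤ (1 - lam n) * s n + lam n * beta n + c n)
    (hdiv : Tendsto (fun N => ∑ n ∈ Finset.range N, lam n) atTop atTop) :
    Tendsto s atTop (𝓝 0) := by
  rw [NormedAddCommGroup.tendsto_nhds_zero]
  intro ε hε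
  set δ := ε / 4 with hδdef
  have hδ : 0 < δ := by positivity
  have htail := tendsto_sum_nat_add c
  obtain ⟨N, hNtail, hNβ⟩ :
      ∃ N, (∑' k, c (k + N)) < δ ∧ ∀ n, N ≤ n → beta n ≤ δ := by
    obtain ⟨N₁, hN₁⟩ := (hbeta δ hδ).exists_forall_of_atTop
    obtain ⟨N, hN, hNN⟩ := ((htail.eventually_lt_const hδ).and
      (eventually_ge_atTop N₁)).exists
    exact ⟨N, hN, fun n hn => hN₁ n (le_trans hNN hn)⟩
  have hcsum' : Summable (fun k => c (k + N)) := (summable_nat_add_iff N).2 hcsum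
  have hctail : ∀ m, ∑ k ∈ Finset.range m, c (N + k) ≤ δ := by
    intro m
    calc ∑ k ∈ Finset.range m, c (N + k) = ∑ k ∈ Finset.range m, c (k + N) := by
          exact Finset.sum_congr rfl fun k _ => by rw [Nat.add_comm]
      _ ≤ ∑' k, c (k + N) := Summable.sum_le_tsum _ (fun k _ => hc0 _) hcsum'
      _ ≤ δ := le_of_lt hNtail
  have hB0 : 0 ≤ B := le_trans (hs0 0) (hsB 0)
  -- the inductive bound
  have hbound : ∀ m, s (N + m) ≤
      (∏ k ∈ Finset.range m, (1 - lam (N + k))) * B + δ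
        + ∑ k ∈ Finset.range m, c (N + k) := by
    intro m
    induction m with
    | zero => simpa using by linarith [hsB N, hδ.le]
    | succ m ih =>
      have hP0 : 0 ≤ ∏ k ∈ Finset.range m, (1 - lam (N + k)) :=
        Finset.prod_nonneg fun k _ => by linarith [(hlam (N+k)).2]
      have hS0 : 0 ≤ ∑ k ∈ Finset.range m, c (N + k) :=
        Finset.sum_nonneg fun k _ => hc0 _
      have hrec' := hrec (N + m)
      have hβ' : beta (N + m) ≤ δ := hNβ _ (Nat.le_add_right _ _)
      have hlam' := hlam (N + m)
      obtain ⟨hl0, hl1⟩ := hlam'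
      rw [Finset.prod_range_succ, Finset.sum_range_succ]
      have hsnn := hs0 (N + m)
      have : N + m + 1 = N + (m + 1) := by omega
      rw [← this]
      nlinarith [mul_le_mul_of_nonneg_left ih (by linarith : (0:ℝ) ≤ 1 - lam (N+m)),
        mul_le_mul_of_nonneg_left hβ' hl0]
  -- product tends to zero
  have hPle : ∀ m, (∏ k ∈ Finset.range m, (1 - lam (N + k)))
      ≤ Real.exp (-(∑ k ∈ Finset.range m, lam (N + k))) := by
    intro m
    have h1 : ∏ k ∈ Finset.range m, (1 - lam (N + k))
        ≤ ∏ k ∈ Finset.range m, Real.exp (-(lam (N + k))) := by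
      refine Finset.prod_le_prod (fun k _ => by linarith [(hlam (N+k)).2])
        (fun k _ => by
          have := Real.add_one_le_exp (-(lam (N + k)))
          linarith)
    rw [← Real.exp_sum, Finset.sum_neg_distrib] at h1
    exact h1
  have hsumdiv : Tendsto (fun m => ∑ k ∈ Finset.range m, lam (N + k)) atTop atTop := by
    have hshift : Tendsto (fun m => N + m) atTop atTop :=
      tendsto_atTop_mono (fun m => Nat.le_add_left m N) tendsto_id
    have h1 : Tendsto (fun m => ∑ n ∈ Finset.range (N + m), lam n) atTop atTop :=
      hdiv.comp hshift
    have h2 : ∀ m, ∑ k ∈ Finset.range m, lam (N + k)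
        = (∑ n ∈ Finset.range (N + m), lam n) + -∑ n ∈ Finset.range N, lam n := by
      intro m; rw [Finset.sum_range_add]; ring
    simp only [h2]
    exact tendsto_atTop_add_const_right _ _ h1
  have hPtend : Tendsto (fun m => (∏ k ∈ Finset.range m, (1 - lam (N + k))) * B)
      atTop (𝓝 0) := by
    have hexp : Tendsto (fun m => Real.exp (-(∑ k ∈ Finset.range m, lam (N + k))))
        atTop (𝓝 0) := Real.tendsto_exp_atBot.comp (tendsto_neg_atTop_atBot.comp hsumdiv)
    have hP0 : ∀ m, 0 ≤ ∏ k ∈ Finset.range m, (1 - lam (N + k)) :=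
      fun m => Finset.prod_nonneg fun k _ => by linarith [(hlam (N+k)).2]
    have := (squeeze_zero hP0 hPle hexp)
    simpa using this.mul_const B
  have hev : ∀ᶠ m in atTop, (∏ k ∈ Finset.range m, (1 - lam (N + k))) * B < δ :=
    hPtend.eventually_lt_const hδ
  obtain ⟨M, hM⟩ := hev.exists_forall_of_atTop
  rw [eventually_atTop]
  refine ⟨N + M, fun n hn => ?_⟩
  have h1 : s n ≤ (∏ k ∈ Finset.range (n - N), (1 - lam (N + k))) * B + δ
      + ∑ k ∈ Finset.range (n - N), c (N + k) := by
    have := hbound (n - N); rwa [Nat.add_sub_cancel' (by omega : N ≤ n)] at this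
  have h2 := hM (n - N) (by omega)
  have h3 := hctail (n - N)
  have : s n < 3 * δ := by linarith
  rw [Real.norm_eq_abs, abs_of_nonneg (hs0 n)]
  linarith


lemma combo_identity {E : Type*} [NormedAddCommGroup E] [InnerProductSpace ℝ E]
    (x p q : E) (a b : ℝ) (hab : a + b = 1) :
    ‖x - (a • p + b • q)‖ ^ 2
      = a * ‖x - p‖ ^ 2 + b * ‖x - q‖ ^ 2 - a * b * ‖p - q‖ ^ 2 := by
  have h1 : x - (a • p + b • q) = a • (x - p) + b • (x - q) := by
    have : a • x + b • x = x := by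
      rw [← add_smul, hab, one_smul]
    rw [smul_sub, smul_sub]
    rw [show a • x - a • p + (b • x - b • q) = (a • x + b • x) - (a • p + b • q) by abel,
      this]
  have h2 : p - q = (x - q) - (x - p) := by abel
  have hd : ‖p - q‖ ^ 2 = ‖x - q‖ ^ 2 - 2 * ⟪x - p, x - q⟫ + ‖x - p‖ ^ 2 := by
    rw [h2, norm_sub_sq_real, real_inner_comm]
  rw [h1, norm_add_sq_real]
  rw [real_inner_smul_left, real_inner_smul_right]
  rw [norm_smul, norm_smul, mul_pow, mul_pow, Real.norm_eq_abs, Real.norm_eq_abs,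
    sq_abs, sq_abs, hd]
  linear_combination (a * ‖x - p‖ ^ 2 + b * ‖x - q‖ ^ 2) * hab

lemma fix_convex {E : Type*} [NormedAddCommGroup E] [InnerProductSpace ℝ E]
    (C : Set E) (hCco : Convex ℝ C)
    (T : E → E) (hT : ∀ x ∈ C, ∀ y ∈ C, ‖T x - T y‖ ≤ ‖x - y‖) :
    Convex ℝ {x | x ∈ C ∧ T x = x} := by
  intro p hp q hq a b ha hb hab
  obtain ⟨hpC, hpT⟩ := hp
  obtain ⟨hqC, hqT⟩ := hq
  set m := a • p + b • q with hm
  have hmC : m ∈ C := hCco hpC hqC ha hb hab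
  refine ⟨hmC, ?_⟩
  have h1 : ‖T m - p‖ ≤ ‖m - p‖ := by
    have := hT m hmC p hpC; rwa [hpT] at this
  have h2 : ‖T m - q‖ ≤ ‖m - q‖ := by
    have := hT m hmC q hqC; rwa [hqT] at this
  have hmp : ‖m - p‖ = b * ‖p - q‖ := by
    have : m - p = b • (q - p) := by
      rw [hm]
      have : a • p + b • q - p = a • p + b • q - (a + b) • p := by rw [hab, one_smul]
      rw [this, add_smul, smul_sub]
      abel
    rw [this, norm_smul, Real.norm_eq_abs, abs_of_nonneg hb, norm_sub_rev]
  have hmq : ‖m - q‖ = a * ‖p - q‖ := by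
    have : m - q = a • (p - q) := by
      rw [hm]
      have : a • p + b • q - q = a • p + b • q - (a + b) • q := by rw [hab, one_smul]
      rw [this, add_smul, smul_sub]
      abel
    rw [this, norm_smul, Real.norm_eq_abs, abs_of_nonneg ha]
  have hid := combo_identity (T m) p q a b hab
  rw [← hm] at hid
  have h3 : ‖T m - m‖ ^ 2 ≤ 0 := by
    have e1 : ‖T m - p‖ ^ 2 ≤ (b * ‖p - q‖) ^ 2 := by
      rw [← hmp]; exact pow_le_pow_left₀ (norm_nonneg _) h1 2
    have e2 : ‖T m - q‖ ^ 2 ≤ (a * ‖p - q‖) ^ 2 := by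
      rw [← hmq]; exact pow_le_pow_left₀ (norm_nonneg _) h2 2
    have habd : a * (b * ‖p - q‖) ^ 2 + b * (a * ‖p - q‖) ^ 2
        - a * b * ‖p - q‖ ^ 2 = 0 := by
      have hb' : b = 1 - a := by linarith
      rw [hb']; ring
    linarith [mul_le_mul_of_nonneg_left e1 ha, mul_le_mul_of_nonneg_left e2 hb]
  have : ‖T m - m‖ = 0 := by nlinarith [norm_nonneg (T m - m), sq_nonneg ‖T m - m‖]
  rw [norm_sub_eq_zero_iff] at this
  exact this


lemma key {E : Type*} [NormedAddCommGroup E] [InnerProductSpace ℝ E] [CompleteSpace E]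
    (C : Set E) (hCcl : IsClosed C) (hCco : Convex ℝ C)
    (R : ℝ) (hR : ∀ x ∈ C, ‖x‖ ≤ R)
    (T : E → E) (hT : ∀ x ∈ C, ∀ y ∈ C, ‖T x - T y‖ ≤ ‖x - y‖)
    (y : ℕ → E) (hy : ∀ n, y n ∈ C)
    (hreg : Tendsto (fun n => ‖y n - T (y n)‖) atTop (𝓝 0)) :
    ∃ b ∈ C, T b = b ∧ ∀ (v : E) (c : ℝ), (∀ n, c ≤ ⟪v, y n⟫) → c ≤ ⟪v, b⟫ := by
  have hR0 : 0 ≤ R := le_trans (norm_nonneg _) (hR _ (hy 0))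
  obtain ⟨U, hU⟩ := Filter.exists_ultrafilter_le (atTop : Filter ℕ)
  -- ultrafilter limits of bounded real sequences exist
  have hlim : ∀ (a : ℕ → ℝ) (M : ℝ), (∀ n, |a n| ≤ M) → ∃ c, Tendsto a (↑U) (𝓝 c) := by
    intro a M hM
    obtain ⟨x, -, hx⟩ := (isCompact_Icc (a := -M) (b := M)).ultrafilter_le_nhds
      (U.map a) (by
        rw [le_principal_iff, Ultrafilter.mem_coe, Ultrafilter.mem_map]
        filter_upwards [] with n
        exact abs_le.1 (hM n))
    exact ⟨x, hx⟩
  have hg : ∀ v : E, ∃ c, Tendsto (fun n => ⟪y n, v⟫) (↑U) (𝓝 c) := by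
    intro v
    refine hlim _ (R * ‖v‖) fun n => ?_
    calc |⟪y n, v⟫| ≤ ‖y n‖ * ‖v‖ := abs_real_inner_le_norm _ _
      _ ≤ R * ‖v‖ := by gcongr; exacts [hR _ (hy n)]
  choose g hgt using hg
  have hadd : ∀ v w, g (v + w) = g v + g w := fun v w =>
    tendsto_nhds_unique (hgt (v + w))
      (((hgt v).add (hgt w)).congr (fun n => (inner_add_right _ _ _).symm))
  have hsmul : ∀ (r : ℝ) (v : E), g (r • v) = r * g v := fun r v =>
    tendsto_nhds_unique (hgt (r • v))
      (((hgt v).const_mul r).congr (fun n => (real_inner_smul_right _ _ _).symm))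
  have hgbd : ∀ v, |g v| ≤ R * ‖v‖ := by
    intro v
    have h1 : Tendsto (fun n => |⟪y n, v⟫|) (↑U) (𝓝 |g v|) := (hgt v).abs
    refine le_of_tendsto h1 ?_
    filter_upwards [] with n
    calc |⟪y n, v⟫| ≤ ‖y n‖ * ‖v‖ := abs_real_inner_le_norm _ _
      _ ≤ R * ‖v‖ := by gcongr; exacts [hR _ (hy n)]
  let ℓ : E →L[ℝ] ℝ := LinearMap.mkContinuous
    { toFun := g, map_add' := hadd, map_smul' := hsmul } R
    (fun v => by simpa [Real.norm_eq_abs] using hgbd v)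
  set b : E := (InnerProductSpace.toDual ℝ E).symm ℓ with hbdef
  have hbv : ∀ v, ⟪b, v⟫ = g v := fun v => InnerProductSpace.toDual_symm_apply
  -- the quadratic functional
  obtain ⟨c0, hc0⟩ := hlim (fun n => ‖y n‖ ^ 2) (R ^ 2) (fun n => by
    rw [abs_of_nonneg (by positivity)]
    exact pow_le_pow_left₀ (norm_nonneg _) (hR _ (hy n)) 2)
  set Q : E → ℝ := fun x => c0 - 2 * g x + ‖x‖ ^ 2 with hQdef
  have hQt : ∀ x : E, Tendsto (fun n => ‖y n - x‖ ^ 2) (↑U) (𝓝 (Q x)) := by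
    intro x
    have : ∀ n, ‖y n - x‖ ^ 2 = ‖y n‖ ^ 2 - 2 * ⟪y n, x⟫ + ‖x‖ ^ 2 :=
      fun n => norm_sub_sq_real _ _
    simp only [this]
    exact (hc0.sub ((hgt x).const_mul 2)).add tendsto_const_nhds
  have hQid : ∀ x : E, Q x = Q b + ‖x - b‖ ^ 2 := by
    intro x
    have h1 : g b = ‖b‖ ^ 2 := by
      rw [← hbv b, real_inner_self_eq_norm_sq]
    have h2 : g x = ⟪b, x⟫ := (hbv x).symm
    rw [norm_sub_sq_real, hQdef]
    simp only []
    rw [h1, h2, real_inner_comm]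
    ring
  -- b ∈ C
  have hCne : C.Nonempty := ⟨y 0, hy 0⟩
  have hbC : b ∈ C := by
    obtain ⟨p, hpC, hpmin⟩ := exists_norm_eq_iInf_of_complete_convex hCne
      (hCcl.isComplete) hCco b
    have hproj : ∀ w ∈ C, ⟪b - p, w - p⟫ ≤ 0 :=
      (norm_eq_iInf_iff_real_inner_le_zero hCco hpC).1 hpmin
    have hineq : ∀ n, ‖y n - p‖ ^ 2 + ‖b - p‖ ^ 2 ≤ ‖y n - b‖ ^ 2 := by
      intro n
      have h2 := hproj (y n) (hy n)
      have h3 : ⟪y n - p, b - p⟫ ≤ 0 := by rw [real_inner_comm]; exact h2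
      have h4 : y n - b = (y n - p) - (b - p) := by abel
      have h5 : ‖(y n - p) - (b - p)‖ ^ 2
          = ‖y n - p‖ ^ 2 - 2 * ⟪y n - p, b - p⟫ + ‖b - p‖ ^ 2 :=
        norm_sub_sq_real _ _
      rw [h4, h5]; linarith
    have hle : Q p + ‖b - p‖ ^ 2 ≤ Q b :=
      le_of_tendsto_of_tendsto' ((hQt p).add_const _) (hQt b) hineq
    have h4 := hQid p
    have h5 : b = p := by
      have : ‖b - p‖ ^ 2 ≤ 0 := by
        have : ‖p - b‖ ^ 2 = ‖b - p‖ ^ 2 := by rw [norm_sub_rev]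
        nlinarith
      have : ‖b - p‖ = 0 := by nlinarith [norm_nonneg (b - p), sq_nonneg ‖b - p‖]
      rwa [norm_sub_eq_zero_iff] at this
    rw [h5]; exact hpC
  -- T b = b
  have hQb0 : 0 ≤ Q b := le_of_tendsto_of_tendsto' tendsto_const_nhds (hQt b)
    (fun n => by positivity)
  have hTb : T b = b := by
    have hnb : Tendsto (fun n => ‖y n - b‖) (↑U) (𝓝 (Real.sqrt (Q b))) := by
      have := (hQt b).sqrt
      refine this.congr fun n => ?_
      rw [Real.sqrt_sq (norm_nonneg _)]
    have hreg' : Tendsto (fun n => ‖y n - T (y n)‖) (↑U) (𝓝 0) := hreg.mono_left hU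
    have hrhs : Tendsto (fun n => (‖y n - T (y n)‖ + ‖y n - b‖) ^ 2) (↑U)
        (𝓝 (Q b)) := by
      have := ((hreg'.add hnb).pow 2)
      simpa [Real.sq_sqrt hQb0] using this
    have hineq : ∀ n, ‖y n - T b‖ ^ 2 ≤ (‖y n - T (y n)‖ + ‖y n - b‖) ^ 2 := by
      intro n
      have h1 : ‖y n - T b‖ ≤ ‖y n - T (y n)‖ + ‖T (y n) - T b‖ := by
        have : y n - T b = (y n - T (y n)) + (T (y n) - T b) := by abel
        rw [this]; exact norm_add_le _ _
      have h2 := hT (y n) (hy n) b hbC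
      have h3 : ‖y n - T b‖ ≤ ‖y n - T (y n)‖ + ‖y n - b‖ := by linarith
      exact pow_le_pow_left₀ (norm_nonneg _) h3 2
    have hle : Q (T b) ≤ Q b := le_of_tendsto_of_tendsto' (hQt (T b)) hrhs hineq
    have h4 := hQid (T b)
    have : ‖T b - b‖ = 0 := by nlinarith [norm_nonneg (T b - b), sq_nonneg ‖T b - b‖]
    rwa [norm_sub_eq_zero_iff] at this
  refine ⟨b, hbC, hTb, fun v c h => ?_⟩
  have h1 : Tendsto (fun n => ⟪y n, v⟫) (↑U) (𝓝 (g v)) := hgt v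
  have h2 : c ≤ g v := le_of_tendsto_of_tendsto' tendsto_const_nhds h1
    (fun n => by rw [real_inner_comm]; exact h n)
  rw [real_inner_comm, hbv v]; exact h2

set_option maxHeartbeats 1000000 in
/-- Wittmann's theorem: for a nonexpansive mapping `T` on a nonempty bounded
closed convex subset `C` of a Hilbert space, the Halpern iteration
`x_{n+1} = (1-λ_n) T x_n + λ_n u` with `λ_n → 0`, `Σ λ_n = ∞`,
`Σ |λ_{n+1} - λ_n| < ∞` converges strongly to a fixed point of `T`. -/
theorem stmt_18 (E : Type*) [NormedAddCommGroup E] [InnerProductSpace ℝ E] [CompleteSpace E]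
    (C : Set E) (hCne : C.Nonempty) (hCb : Bornology.IsBounded C)
    (hCcl : IsClosed C) (hCco : Convex ℝ C)
    (T : E → E) (hTmaps : ∀ x ∈ C, T x ∈ C)
    (hT : ∀ x ∈ C, ∀ y ∈ C, ‖T x - T y‖ ≤ ‖x - y‖)
    (u : E) (hu : u ∈ C)
    (l : ℕ → ℝ) (hl : ∀ n, 1 ≤ n → l n ∈ Set.Icc (0 : ℝ) 1)
    (hllim : Tendsto l atTop (𝓝 0))
    (hldiv : Tendsto (fun N => ∑ n ∈ Finset.Icc 1 N, l n) atTop atTop)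
    (hlsum : ∃ M : ℝ, ∀ N : ℕ, ∑ n ∈ Finset.Icc 1 N, |l (n + 1) - l n| ≤ M)
    (xs : ℕ → E) (hx1 : xs 1 ∈ C)
    (hxs : ∀ n : ℕ, 1 ≤ n → xs (n + 1) = (1 - l n) • T (xs n) + l n • u) :
    ∃ z ∈ C, T z = z ∧ Tendsto xs atTop (𝓝 z) := by
  obtain ⟨R, hR⟩ := hCb.exists_norm_le
  have hR0 : 0 ≤ R := le_trans (norm_nonneg _) (hR _ hu)
  have hd2R : ∀ x ∈ C, ∀ y ∈ C, ‖x - y‖ ≤ 2 * R := fun x hx y hy => by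
    calc ‖x - y‖ ≤ ‖x‖ + ‖y‖ := norm_sub_le _ _
      _ ≤ 2 * R := by linarith [hR x hx, hR y hy]
  -- membership
  have hxC : ∀ n, xs (n + 1) ∈ C := by
    intro n
    induction n with
    | zero => exact hx1
    | succ n ih =>
      rw [hxs (n + 1) (by omega)]
      obtain ⟨h0, h1⟩ := hl (n + 1) (by omega)
      exact hCco (hTmaps _ ih) hu (by linarith) h0 (by ring)
  -- reindexing sums
  have hreidx : ∀ (f : ℕ → ℝ) (N : ℕ),
      ∑ n ∈ Finset.Icc 1 N, f n = ∑ n ∈ Finset.range N, f (n + 1) := by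
    intro f N
    rw [← Finset.Ico_add_one_right_eq_Icc, Finset.sum_Ico_eq_sum_range]
    simp only [Nat.add_sub_cancel]
    exact Finset.sum_congr rfl fun k _ => by rw [Nat.add_comm]
  -- divergence for shifted lambda
  have hdiv1 : Tendsto (fun N => ∑ n ∈ Finset.range N, l (n + 1)) atTop atTop := by
    refine hldiv.congr fun N => hreidx l N
  have hdiv2 : Tendsto (fun N => ∑ n ∈ Finset.range N, l (n + 2)) atTop atTop := by
    have h1 : ∀ N, ∑ n ∈ Finset.range N, l (n + 2)
        = (∑ n ∈ Finset.range (N + 1), l (n + 1)) + -(l 1) := by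
      intro N
      rw [Finset.sum_range_succ']
      have e : ∑ n ∈ Finset.range N, l (n + 1 + 1) = ∑ n ∈ Finset.range N, l (n + 2) :=
        Finset.sum_congr rfl fun k _ => by norm_num
      rw [e]; norm_num
    simp only [h1]
    refine tendsto_atTop_add_const_right _ _ (hdiv1.comp ?_)
    exact tendsto_atTop_mono (fun n => Nat.le_succ n) tendsto_id
  -- summability of lambda differences
  obtain ⟨M, hM⟩ := hlsum
  have hM0 : 0 ≤ M := le_trans (by simp) (hM 0)
  have hfsum : Summable (fun n => |l (n + 1 + 1) - l (n + 1)|) := by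
    have hsum0 : Summable (fun n => |l (n + 1) - l n|) := by
      refine summable_of_sum_range_le (c := |l 1 - l 0| + M) (fun n => abs_nonneg _) ?_
      intro N
      cases N with
      | zero => simp; positivity
      | succ N =>
        rw [Finset.sum_range_succ']
        simp only [Nat.zero_add]
        have := hM N
        rw [hreidx (fun n => |l (n + 1) - l n|) N] at this
        linarith
    exact (summable_nat_add_iff 1).2 hsum0
  -- Step A : successive differences tend to zero
  have hstepA : Tendsto (fun n => ‖xs (n + 2) - xs (n + 1)‖) atTop (𝓝 0) := by
    refine lemA (fun n => ‖xs (n + 2) - xs (n + 1)‖) (fun n => l (n + 2)) (fun _ => 0)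
      (fun n => 2 * R * |l (n + 2) - l (n + 1)|) (2 * R)
      (fun n => norm_nonneg _)
      (fun n => hd2R _ (hxC (n + 1)) _ (hxC n))
      (fun n => hl (n + 2) (by omega))
      (fun n => by positivity)
      (by simpa [mul_assoc] using hfsum.mul_left (2 * R))
      (fun ε hε => Eventually.of_forall fun n => le_of_lt hε)
      ?_ hdiv2
    intro n
    have hdiff : xs (n + 3) - xs (n + 2)
        = (1 - l (n + 2)) • (T (xs (n + 2)) - T (xs (n + 1)))
          + (l (n + 2) - l (n + 1)) • (u - T (xs (n + 1))) := by
      rw [hxs (n + 2) (by omega), hxs (n + 1) (by omega)]; module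
    obtain ⟨hl0, hl1⟩ := hl (n + 2) (by omega)
    have e1 : ‖(1 - l (n + 2)) • (T (xs (n + 2)) - T (xs (n + 1)))‖
        ≤ (1 - l (n + 2)) * ‖xs (n + 2) - xs (n + 1)‖ := by
      rw [norm_smul, Real.norm_eq_abs, abs_of_nonneg (by linarith)]
      exact mul_le_mul_of_nonneg_left (hT _ (hxC (n + 1)) _ (hxC n)) (by linarith)
    have e2 : ‖(l (n + 2) - l (n + 1)) • (u - T (xs (n + 1)))‖
        ≤ |l (n + 2) - l (n + 1)| * (2 * R) := by
      rw [norm_smul, Real.norm_eq_abs]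
      exact mul_le_mul_of_nonneg_left (hd2R _ hu _ (hTmaps _ (hxC n))) (abs_nonneg _)
    calc ‖xs (n + 1 + 2) - xs (n + 1 + 1)‖ = ‖xs (n + 3) - xs (n + 2)‖ := by norm_num
      _ ≤ ‖(1 - l (n + 2)) • (T (xs (n + 2)) - T (xs (n + 1)))‖
          + ‖(l (n + 2) - l (n + 1)) • (u - T (xs (n + 1)))‖ := by
          rw [hdiff]; exact norm_add_le _ _
      _ ≤ (1 - l (n + 2)) * ‖xs (n + 2) - xs (n + 1)‖
          + l (n + 2) * 0 + 2 * R * |l (n + 2) - l (n + 1)| := by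
          rw [mul_zero]; linarith [e1, e2]
  -- asymptotic regularity
  have hreg : Tendsto (fun n => ‖xs (n + 1) - T (xs (n + 1))‖) atTop (𝓝 0) := by
    have hbd : ∀ n, ‖xs (n + 1) - T (xs (n + 1))‖
        ≤ ‖xs (n + 2) - xs (n + 1)‖ + l (n + 1) * (2 * R) := by
      intro n
      have h1 : xs (n + 2) - T (xs (n + 1)) = l (n + 1) • (u - T (xs (n + 1))) := by
        rw [hxs (n + 1) (by omega)]; module
      have h2 : ‖xs (n + 2) - T (xs (n + 1))‖ ≤ l (n + 1) * (2 * R) := by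
        rw [h1, norm_smul, Real.norm_eq_abs, abs_of_nonneg (hl (n + 1) (by omega)).1]
        exact mul_le_mul_of_nonneg_left (hd2R _ hu _ (hTmaps _ (hxC n)))
          (hl (n + 1) (by omega)).1
      calc ‖xs (n + 1) - T (xs (n + 1))‖
          ≤ ‖xs (n + 1) - xs (n + 2)‖ + ‖xs (n + 2) - T (xs (n + 1))‖ := by
            have : xs (n + 1) - T (xs (n + 1))
                = (xs (n + 1) - xs (n + 2)) + (xs (n + 2) - T (xs (n + 1))) := by abel
            rw [this]; exact norm_add_le _ _
        _ ≤ ‖xs (n + 2) - xs (n + 1)‖ + l (n + 1) * (2 * R) := by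
            rw [norm_sub_rev (xs (n + 1))]; linarith
    have hlim2 : Tendsto (fun n => ‖xs (n + 2) - xs (n + 1)‖ + l (n + 1) * (2 * R))
        atTop (𝓝 0) := by
      have h3 : Tendsto (fun n => l (n + 1)) atTop (𝓝 0) :=
        (tendsto_add_atTop_iff_nat 1).2 hllim
      simpa using hstepA.add (h3.mul_const (2 * R))
    exact squeeze_zero (fun n => norm_nonneg _) hbd hlim2
  -- fixed point set
  set F : Set E := {x | x ∈ C ∧ T x = x} with hFdef
  have hFne : F.Nonempty := by
    obtain ⟨b, hbC, hbT, -⟩ := key C hCcl hCco R hR T hT (fun n => xs (n + 1)) hxC hreg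
    exact ⟨b, hbC, hbT⟩
  have hFclosed : IsClosed F := by
    refine IsSeqClosed.isClosed ?_
    intro x p hx hxp
    have hpC : p ∈ C := hCcl.mem_of_tendsto hxp (Eventually.of_forall fun k => (hx k).1)
    refine ⟨hpC, ?_⟩
    have hb : ∀ k, ‖T p - p‖ ≤ 2 * ‖x k - p‖ := by
      intro k
      have h1 : ‖T p - T (x k)‖ ≤ ‖p - x k‖ := hT p hpC (x k) (hx k).1
      have h2 : T p - p = (T p - T (x k)) + (x k - p) := by rw [(hx k).2]; abel
      calc ‖T p - p‖ ≤ ‖T p - T (x k)‖ + ‖x k - p‖ := by rw [h2]; exact norm_add_le _ _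
        _ ≤ 2 * ‖x k - p‖ := by rw [norm_sub_rev p] at h1; linarith
    have hlim3 : Tendsto (fun k => 2 * ‖x k - p‖) atTop (𝓝 0) := by
      have := (tendsto_iff_norm_sub_tendsto_zero.1 hxp).const_mul 2
      simpa using this
    have := le_of_tendsto_of_tendsto' (tendsto_const_nhds (x := ‖T p - p‖)) hlim3 hb
    have : ‖T p - p‖ = 0 := le_antisymm this (norm_nonneg _)
    rw [norm_sub_eq_zero_iff] at this
    exact this
  have hFconv : Convex ℝ F := fix_convex C hCco T hT
  -- projection of u onto F
  obtain ⟨z, hzF, hzmin⟩ :=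
    exists_norm_eq_iInf_of_complete_convex hFne hFclosed.isComplete hFconv u
  have hproj : ∀ w ∈ F, ⟪u - z, w - z⟫ ≤ 0 :=
    (norm_eq_iInf_iff_real_inner_le_zero hFconv hzF).1 hzmin
  obtain ⟨hzC, hzT⟩ := hzF
  -- the limsup estimate
  have hlimsup : ∀ ε > 0, ∀ᶠ n in atTop, ⟪u - z, xs (n + 1) - z⟫ ≤ ε := by
    intro ε hε
    by_contra hcon
    rw [Filter.not_eventually] at hcon
    have hcon' : ∃ᶠ n in atTop, ε < ⟪u - z, xs (n + 1) - z⟫ :=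
      hcon.mono fun n h => not_le.1 h
    obtain ⟨φ, hφmono, hφ⟩ := Filter.extraction_of_frequently_atTop hcon'
    obtain ⟨b, hbC, hbT, hbcl⟩ := key C hCcl hCco R hR T hT
      (fun k => xs (φ k + 1)) (fun k => hxC (φ k))
      (hreg.comp hφmono.tendsto_atTop)
    have h1 : ε + ⟪u - z, z⟫ ≤ ⟪u - z, b⟫ := by
      refine hbcl (u - z) (ε + ⟪u - z, z⟫) fun k => ?_
      have h2 := hφ k
      rw [inner_sub_right] at h2
      linarith
    have h3 := hproj b ⟨hbC, hbT⟩
    rw [inner_sub_right] at h3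
    linarith
  -- final recursion
  have hfin : Tendsto (fun n => ‖xs (n + 1) - z‖ ^ 2) atTop (𝓝 0) := by
    refine lemA (fun n => ‖xs (n + 1) - z‖ ^ 2) (fun n => l (n + 1))
      (fun n => 2 * ⟪u - z, xs (n + 2) - z⟫) (fun _ => 0) ((2 * R) ^ 2)
      (fun n => by positivity)
      (fun n => pow_le_pow_left₀ (norm_nonneg _) (hd2R _ (hxC n) _ hzC) 2)
      (fun n => hl (n + 1) (by omega))
      (fun n => le_refl 0) summable_zero
      ?_ ?_ hdiv1
    · intro ε hε
      have := hlimsup (ε / 2) (by positivity)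
      rw [eventually_atTop] at this ⊢
      obtain ⟨N, hN⟩ := this
      refine ⟨N, fun n hn => ?_⟩
      have h2 : (⟪u - z, xs (n + 2) - z⟫ : ℝ) ≤ ε / 2 := hN (n + 1) (by omega)
      show 2 * ⟪u - z, xs (n + 2) - z⟫ ≤ ε
      linarith
    · intro n
      obtain ⟨hl0, hl1⟩ := hl (n + 1) (by omega)
      set A := (1 - l (n + 1)) • (T (xs (n + 1)) - z) with hA
      set Bv := l (n + 1) • (u - z) with hB
      have hdecomp : xs (n + 2) - z = A + Bv := by
        rw [hA, hB, hxs (n + 1) (by omega)]; module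
      have hsq : ‖A + Bv‖ ^ 2 ≤ ‖A‖ ^ 2 + 2 * ⟪Bv, A + Bv⟫ := by
        have e1 := norm_add_sq_real A Bv
        have e2 : ⟪Bv, A + Bv⟫ = ⟪Bv, A⟫ + ⟪Bv, Bv⟫ := inner_add_right _ _ _
        have e3 : ⟪Bv, Bv⟫ = ‖Bv‖ ^ 2 := real_inner_self_eq_norm_sq _
        have e4 : ⟪A, Bv⟫ = ⟪Bv, A⟫ := real_inner_comm _ _
        nlinarith [sq_nonneg ‖Bv‖]
      have hAle : ‖A‖ ^ 2 ≤ (1 - l (n + 1)) * ‖xs (n + 1) - z‖ ^ 2 := by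
        have e1 : ‖A‖ = (1 - l (n + 1)) * ‖T (xs (n + 1)) - z‖ := by
          rw [hA, norm_smul, Real.norm_eq_abs, abs_of_nonneg (by linarith)]
        have e2 : ‖T (xs (n + 1)) - z‖ ≤ ‖xs (n + 1) - z‖ := by
          have := hT _ (hxC n) z hzC; rwa [hzT] at this
        have e3 : ‖A‖ ^ 2 ≤ (1 - l (n + 1)) ^ 2 * ‖xs (n + 1) - z‖ ^ 2 := by
          rw [e1, mul_pow]
          exact mul_le_mul_of_nonneg_left
            (pow_le_pow_left₀ (norm_nonneg _) e2 2) (by positivity)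
        have e4 : (1 - l (n + 1)) ^ 2 * ‖xs (n + 1) - z‖ ^ 2
            ≤ (1 - l (n + 1)) * ‖xs (n + 1) - z‖ ^ 2 :=
          mul_le_mul_of_nonneg_right (by nlinarith) (sq_nonneg _)
        linarith
      have hBip : 2 * ⟪Bv, A + Bv⟫
          = l (n + 1) * (2 * ⟪u - z, xs (n + 2) - z⟫) := by
        rw [← hdecomp, hB, real_inner_smul_left]; ring
      calc ‖xs (n + 1 + 1) - z‖ ^ 2 = ‖A + Bv‖ ^ 2 := by rw [← hdecomp]
        _ ≤ ‖A‖ ^ 2 + 2 * ⟪Bv, A + Bv⟫ := hsq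
        _ ≤ (1 - l (n + 1)) * ‖xs (n + 1) - z‖ ^ 2
            + l (n + 1) * (2 * ⟪u - z, xs (n + 2) - z⟫) + 0 := by
            rw [hBip]; linarith
  -- conclude
  refine ⟨z, hzC, hzT, ?_⟩
  rw [← tendsto_add_atTop_iff_nat 1]
  rw [tendsto_iff_norm_sub_tendsto_zero]
  have h0 : Tendsto (fun n => Real.sqrt (‖xs (n + 1) - z‖ ^ 2)) atTop (𝓝 0) := by
    simpa using hfin.sqrt
  refine h0.congr fun n => ?_
  rw [Real.sqrt_sq (norm_nonneg _)]
end
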